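/- arXiv:2307.13557 — 6 statements merged into one kernel-verified Lean document; each statement's English description precedes it below -/
import Mathlib

section
/- Let Y and Z be real random variables with equal means and distribution functions F and G respectively. If there exists t₀ such that G(t) - F(t) ≥ 0 for all t < t₀ and G(t) - F(t) ≤ 0 for all t ≥ t₀ (single sign change +, −), then Y ≤_cx Z. -/
/-!
Subtracting the supporting line of `φ` at `t₀` changes both sides by the same amount, because the
means agree, and leaves a convex `ψ ≥ 0` with `ψ t₀ = 0`. Such a `ψ` is the sum of the antitone
function `ψ (min x t₀)`, which vanishes on `[t₀, ∞)`, and the monotone function `ψ (max x t₀)`,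
which vanishes on `(-∞, t₀]`. By the layer-cake formula it suffices to compare the masses of their
superlevel sets: those of the first are half-lines `(-∞, b]` with `b < t₀`, where `F ≤ G`, and
those of the second are half-lines `(b, ∞)` with `t₀ ≤ b`, where `1 - F ≤ 1 - G`.
-/

open MeasureTheory Set

lemma ConvexOn.add_rightDeriv_mul_sub_le {S : Set ℝ} {φ : ℝ → ℝ} (hφ : ConvexOn ℝ S φ) {a x : ℝ}
    (ha : a ∈ interior S) (hx : x ∈ S) :
    φ a + derivWithin φ (Ioi a) a * (x - a) ≤ φ x := by
  rcases lt_trichotomy x a with hxa | rfl | hax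
  · have hslope : slope φ x a ≤ derivWithin φ (Ioi a) a :=
      (hφ.slope_le_leftDeriv_of_mem_interior hx ha hxa).trans
        (hφ.leftDeriv_le_rightDeriv_of_mem_interior ha)
    rw [slope_def_field, div_le_iff₀ (sub_pos.2 hxa)] at hslope
    linarith
  · simp
  · have hslope := hφ.rightDeriv_le_slope_of_mem_interior ha hx hax
    rw [slope_def_field, le_div_iff₀ (sub_pos.2 hax)] at hslope
    linarith

lemma ConvexOn.antitoneOn_of_isMinOn {S : Set ℝ} {f : ℝ → ℝ} (hf : ConvexOn ℝ S f) {a : ℝ}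
    (ha : a ∈ S) (hmin : IsMinOn f S a) : AntitoneOn f (S ∩ Iic a) := by
  intro x hx y hy hxy
  have hseg : y ∈ segment ℝ x a := by
    rw [segment_eq_Icc (hxy.trans hy.2)]
    exact ⟨hxy, hy.2⟩
  exact (hf.le_on_segment hx.1 ha hseg).trans (max_le le_rfl (hmin hx.1))

lemma ConvexOn.monotoneOn_of_isMinOn {S : Set ℝ} {f : ℝ → ℝ} (hf : ConvexOn ℝ S f) {a : ℝ}
    (ha : a ∈ S) (hmin : IsMinOn f S a) : MonotoneOn f (S ∩ Ici a) := by
  intro x hx y hy hxy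
  have hseg : x ∈ segment ℝ a y := by
    rw [segment_eq_Icc (hx.2.trans hxy)]
    exact ⟨hx.2, hxy⟩
  exact (hf.le_on_segment ha hy.1 hseg).trans (max_le (hmin hy.1) le_rfl)

lemma IsLowerSet.eq_Iic_csSup_of_isClosed {α : Type*} [ConditionallyCompleteLinearOrder α]
    [TopologicalSpace α] [OrderTopology α] {s : Set α} (hs : IsLowerSet s) (hc : IsClosed s)
    (hne : s.Nonempty) (hbdd : BddAbove s) : s = Iic (sSup s) :=
  Subset.antisymm (fun _ hx => le_csSup hbdd hx) (hs.Iic_subset (hc.csSup_mem hne hbdd))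

section StochasticOrder

variable {Ω : Type*} [MeasurableSpace Ω] {μ : Measure Ω} {Y Z : Ω → ℝ} {t₀ : ℝ} {f : ℝ → ℝ}

lemma lintegral_comp_le_of_antitone (hY : AEMeasurable Y μ) (hZ : AEMeasurable Z μ)
    (hcdf : ∀ t < t₀, μ {ω | Y ω ≤ t} ≤ μ {ω | Z ω ≤ t})
    (hf : Continuous f) (hanti : Antitone f) (hzero : ∀ x, t₀ ≤ x → f x = 0) :
    ∫⁻ ω, ENNReal.ofReal (f (Y ω)) ∂μ ≤ ∫⁻ ω, ENNReal.ofReal (f (Z ω)) ∂μ := by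
  have hnonneg : ∀ x, 0 ≤ f x := fun x =>
    (le_total x t₀).elim (fun h => hzero t₀ le_rfl ▸ hanti h) (fun h => (hzero x h).ge)
  rw [lintegral_eq_lintegral_meas_le μ (ae_of_all _ fun ω => hnonneg _)
      (hf.measurable.comp_aemeasurable hY),
    lintegral_eq_lintegral_meas_le μ (ae_of_all _ fun ω => hnonneg _)
      (hf.measurable.comp_aemeasurable hZ)]
  refine setLIntegral_mono' measurableSet_Ioi fun u (hu : 0 < u) => ?_
  set L := {x | u ≤ f x}
  change μ (Y ⁻¹' L) ≤ μ (Z ⁻¹' L)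
  have hL_lt : ∀ x ∈ L, x < t₀ := fun x hx =>
    lt_of_not_ge fun h => (hu.trans_le hx).ne' (hzero x h)
  rcases L.eq_empty_or_nonempty with hL | hL
  · simp [hL]
  have hbdd : BddAbove L := ⟨t₀, fun x hx => (hL_lt x hx).le⟩
  have hLc : IsClosed L := isClosed_le continuous_const hf
  have hLb : L = Iic (sSup L) :=
    IsLowerSet.eq_Iic_csSup_of_isClosed (fun x y hyx hx => hx.trans (hanti hyx)) hLc hL hbdd
  rw [hLb]
  exact hcdf _ (hL_lt _ (hLc.csSup_mem hL hbdd))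

lemma lintegral_comp_le_of_monotone [IsProbabilityMeasure μ] (hY : AEMeasurable Y μ)
    (hZ : AEMeasurable Z μ) (hcdf : ∀ t, t₀ ≤ t → μ {ω | Z ω ≤ t} ≤ μ {ω | Y ω ≤ t})
    (hf : Continuous f) (hmono : Monotone f) (hzero : ∀ x, x ≤ t₀ → f x = 0) :
    ∫⁻ ω, ENNReal.ofReal (f (Y ω)) ∂μ ≤ ∫⁻ ω, ENNReal.ofReal (f (Z ω)) ∂μ := by
  have hnonneg : ∀ x, 0 ≤ f x := fun x =>
    (le_total x t₀).elim (fun h => (hzero x h).ge) (fun h => hzero t₀ le_rfl ▸ hmono h)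
  rw [lintegral_eq_lintegral_meas_lt μ (ae_of_all _ fun ω => hnonneg _)
      (hf.measurable.comp_aemeasurable hY),
    lintegral_eq_lintegral_meas_lt μ (ae_of_all _ fun ω => hnonneg _)
      (hf.measurable.comp_aemeasurable hZ)]
  refine setLIntegral_mono' measurableSet_Ioi fun u (hu : 0 < u) => ?_
  -- `{u < f}` is open, so we describe it through its complement, a closed lower set containing `t₀`
  set K := {x | f x ≤ u}
  have ht₀ : t₀ ∈ K := (hzero t₀ le_rfl).trans_le hu.le
  by_cases hbdd : BddAbove K
  swap
  · have hK : ∀ x, f x ≤ u := fun x => by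
      obtain ⟨y, hy, hxy⟩ := not_bddAbove_iff.1 hbdd x
      exact (hmono hxy.le).trans hy
    simp [fun ω => not_lt.2 (hK (Y ω))]
  have hKb : K = Iic (sSup K) :=
    IsLowerSet.eq_Iic_csSup_of_isClosed (fun x y hyx hx => (hmono hyx).trans hx)
      (isClosed_le hf continuous_const) ⟨t₀, ht₀⟩ hbdd
  have hcompl : ∀ X : Ω → ℝ, {ω | u < f (X ω)} = (X ⁻¹' Iic (sSup K))ᶜ := fun X => by
    rw [← hKb]
    ext ω
    simp [K]
  rw [hcompl, hcompl, prob_compl_eq_one_sub₀ (hY.nullMeasurableSet_preimage measurableSet_Iic),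
    prob_compl_eq_one_sub₀ (hZ.nullMeasurableSet_preimage measurableSet_Iic)]
  exact tsub_le_tsub_left (hcdf _ (le_csSup hbdd ht₀)) 1

lemma lintegral_comp_le_of_convexOn [IsProbabilityMeasure μ] (hY : AEMeasurable Y μ)
    (hZ : AEMeasurable Z μ) (hlow : ∀ t < t₀, μ {ω | Y ω ≤ t} ≤ μ {ω | Z ω ≤ t})
    (hhigh : ∀ t, t₀ ≤ t → μ {ω | Z ω ≤ t} ≤ μ {ω | Y ω ≤ t})
    (hf : ConvexOn ℝ univ f) (hmin : IsMinOn f univ t₀) (hf₀ : f t₀ = 0) :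
    ∫⁻ ω, ENNReal.ofReal (f (Y ω)) ∂μ ≤ ∫⁻ ω, ENNReal.ofReal (f (Z ω)) ∂μ := by
  have hcont : Continuous f := continuousOn_univ.1 (hf.continuousOn isOpen_univ)
  have hnonneg : ∀ x, 0 ≤ f x := fun x => hf₀ ▸ hmin (mem_univ x)
  set f₁ : ℝ → ℝ := fun x => f (min x t₀)
  set f₂ : ℝ → ℝ := fun x => f (max x t₀)
  have hf₁ : Continuous f₁ := by fun_prop
  have hf₂ : Continuous f₂ := by fun_prop
  have hsplit : ∀ x, ENNReal.ofReal (f x) = ENNReal.ofReal (f₁ x) + ENNReal.ofReal (f₂ x) :=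
    fun x => by
      rw [← ENNReal.ofReal_add (hnonneg _) (hnonneg _)]
      rcases le_total x t₀ with h | h <;> simp [h, hf₀]
  have hanti : Antitone f₁ := fun x y hxy =>
    hf.antitoneOn_of_isMinOn (mem_univ t₀) hmin ⟨mem_univ _, min_le_right x t₀⟩
      ⟨mem_univ _, min_le_right y t₀⟩ (min_le_min_right t₀ hxy)
  have hmono : Monotone f₂ := fun x y hxy =>
    hf.monotoneOn_of_isMinOn (mem_univ t₀) hmin ⟨mem_univ _, le_max_right x t₀⟩
      ⟨mem_univ _, le_max_right y t₀⟩ (max_le_max_right t₀ hxy)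
  rw [lintegral_congr fun ω => hsplit (Y ω), lintegral_congr fun ω => hsplit (Z ω),
    lintegral_add_left' (by fun_prop), lintegral_add_left' (by fun_prop)]
  exact add_le_add
    (lintegral_comp_le_of_antitone hY hZ hlow hf₁ hanti fun x hx => by simp [f₁, hx, hf₀])
    (lintegral_comp_le_of_monotone hY hZ hhigh hf₂ hmono fun x hx => by simp [f₂, hx, hf₀])

lemma integral_comp_le_of_convexOn [IsProbabilityMeasure μ] (hY : AEMeasurable Y μ)
    (hZ : AEMeasurable Z μ) (hlow : ∀ t < t₀, μ {ω | Y ω ≤ t} ≤ μ {ω | Z ω ≤ t})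
    (hhigh : ∀ t, t₀ ≤ t → μ {ω | Z ω ≤ t} ≤ μ {ω | Y ω ≤ t})
    (hf : ConvexOn ℝ univ f) (hmin : IsMinOn f univ t₀)
    (hfY : Integrable (fun ω => f (Y ω)) μ) (hfZ : Integrable (fun ω => f (Z ω)) μ) :
    ∫ ω, f (Y ω) ∂μ ≤ ∫ ω, f (Z ω) ∂μ := by
  set g : ℝ → ℝ := fun x => f x - f t₀
  have hg_nonneg : ∀ x, 0 ≤ g x := fun x => sub_nonneg.2 (hmin (mem_univ x))
  have hgY : Integrable (fun ω => g (Y ω)) μ := hfY.sub (integrable_const _)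
  have hgZ : Integrable (fun ω => g (Z ω)) μ := hfZ.sub (integrable_const _)
  have hlintegral := lintegral_comp_le_of_convexOn hY hZ hlow hhigh
    (hf.sub (concaveOn_const (f t₀) convex_univ))
    (isMinOn_univ_iff.2 fun x => sub_le_sub_right (hmin (mem_univ x)) _) (sub_self (f t₀))
  have hg : ∫ ω, g (Y ω) ∂μ ≤ ∫ ω, g (Z ω) ∂μ := by
    rw [integral_eq_lintegral_of_nonneg_ae (ae_of_all _ fun ω => hg_nonneg _) hgY.1,
      integral_eq_lintegral_of_nonneg_ae (ae_of_all _ fun ω => hg_nonneg _) hgZ.1]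
    exact ENNReal.toReal_mono hgZ.lintegral_lt_top.ne hlintegral
  simpa [g, integral_sub hfY (integrable_const _), integral_sub hfZ (integrable_const _)] using hg

end StochasticOrder

/-- If `Y` and `Z` have equal means and the difference of distribution functions
`G - F` has a single sign change `+,-` (at `t₀`), then `Y ≤_cx Z`. -/
theorem single_crossing_implies_convex_order
    {Ω : Type*} [MeasurableSpace Ω] (μ : Measure Ω) [IsProbabilityMeasure μ]
    (Y Z : Ω → ℝ) (hY : Integrable Y μ) (hZ : Integrable Z μ)
    (hmean : ∫ ω, Y ω ∂μ = ∫ ω, Z ω ∂μ)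
    (t₀ : ℝ)
    (hsign : ∀ t : ℝ,
      (t < t₀ → μ {ω | Y ω ≤ t} ≤ μ {ω | Z ω ≤ t}) ∧
      (t₀ ≤ t → μ {ω | Z ω ≤ t} ≤ μ {ω | Y ω ≤ t}))
    (φ : ℝ → ℝ) (hφ : ConvexOn ℝ Set.univ φ)
    (hφY : Integrable (fun ω => φ (Y ω)) μ)
    (hφZ : Integrable (fun ω => φ (Z ω)) μ) :
    ∫ ω, φ (Y ω) ∂μ ≤ ∫ ω, φ (Z ω) ∂μ := by
  set c := derivWithin φ (Ioi t₀) t₀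
  have hψ : ConvexOn ℝ univ (fun x => φ x - c * x) :=
    hφ.sub ((LinearMap.mul ℝ ℝ c).concaveOn convex_univ)
  have hmin : IsMinOn (fun x => φ x - c * x) univ t₀ := isMinOn_univ_iff.2 fun x => by
    have := hφ.add_rightDeriv_mul_sub_le (a := t₀) (by simp) (mem_univ x)
    linarith
  have key := integral_comp_le_of_convexOn hY.aemeasurable hZ.aemeasurable
    (fun t ht => (hsign t).1 ht) (fun t ht => (hsign t).2 ht)
    hψ hmin (hφY.sub (hY.const_mul c)) (hφZ.sub (hZ.const_mul c))
  rw [integral_sub hφY (hY.const_mul c), integral_sub hφZ (hZ.const_mul c), integral_const_mul,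
    integral_const_mul, hmean] at key
  linarith
end

section
/- Let X ~ Bernoulli(p) and Y ~ Bernoulli(q) with 0 < p ≤ q ≤ 1. Then Y/q ≤_cx X/p, i.e., for every convex function φ, (1-q)·φ(0) + q·φ(1/q) ≤ (1-p)·φ(0) + p·φ(1/p). -/
open Set

/-- `t * (φ (1 / t) - φ 0)` is the slope of `φ` between `0` and `1 / t`, which grows with `1 / t`. -/
theorem ConvexOn.antitoneOn_mul_sub_apply_one_div {𝕜 : Type*} [Field 𝕜] [LinearOrder 𝕜]
    [IsStrictOrderedRing 𝕜] {φ : 𝕜 → 𝕜} (hφ : ConvexOn 𝕜 univ φ) :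
    AntitoneOn (fun t ↦ t * (φ (1 / t) - φ 0)) (Ioi 0) := by
  intro p (hp : 0 < p) q (hq : 0 < q) hpq
  have hslope := hφ.secant_mono (a := 0) trivial trivial trivial (one_div_ne_zero hq.ne')
    (one_div_ne_zero hp.ne') (one_div_le_one_div_of_le hp hpq)
  simpa only [sub_zero, div_div_eq_mul_div, div_one, mul_comm] using hslope

theorem bernoulli_scaled_convex_order_general (p q : ℝ) (hp : 0 < p) (hpq : p ≤ q)
    (φ : ℝ → ℝ) (hφ : ConvexOn ℝ Set.univ φ) :
    (1 - q) * φ 0 + q * φ (1 / q) ≤ (1 - p) * φ 0 + p * φ (1 / p) := by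
  have h := hφ.antitoneOn_mul_sub_apply_one_div hp (hp.trans_le hpq : 0 < q) hpq
  simp only at h
  linarith

/-- For Bernoulli variables `X ~ Ber(p)`, `Y ~ Ber(q)` with `0 < p ≤ q ≤ 1`,
`Y/q ≤_cx X/p`. -/
theorem bernoulli_scaled_convex_order (p q : ℝ) (hp : 0 < p) (hpq : p ≤ q) (hq : q ≤ 1)
    (φ : ℝ → ℝ) (hφ : ConvexOn ℝ Set.univ φ) :
    (1 - q) * φ 0 + q * φ (1 / q) ≤ (1 - p) * φ 0 + p * φ (1 / p) :=
  bernoulli_scaled_convex_order_general p q hp hpq φ hφ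
end

section
/- Let U₁, …, U_k be i.i.d. Uniform[0,1] random variables with k ≥ 2. Then 2/k ≤ E[1/(U₁ + ⋯ + U_k)] ≤ 2/(k-1). -/
open MeasureTheory Set Real Filter Topology
open scoped ENNReal

/-!
Write `1 / s = ∫₀^∞ e^{-ts} dt`. By Tonelli and the product structure of the cube,
`E[1 / (U₁ + ⋯ + U_k)] = ∫₀^∞ φ(t)^k dt` with `φ(t) = E[e^{-tU}] = (1 - e^{-t}) / t`.
The pointwise bounds `e^{-t/2} ≤ φ(t) ≤ 2 / (2 + t)` (that is, `x ≤ sinh x` and `tanh x ≤ x`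
for `x = t / 2`) integrate to `2 / k` and `2 / (k - 1)`.
-/

theorem lintegral_pi_prod_eq_pow {α : Type*} [MeasurableSpace α] (μ : Measure α) [SigmaFinite μ]
    {f : α → ℝ≥0∞} (hf : Measurable f) (n : ℕ) :
    ∫⁻ x : Fin n → α, ∏ i, f (x i) ∂Measure.pi (fun _ ↦ μ) = (∫⁻ a, f a ∂μ) ^ n := by
  induction n with
  | zero => simp [Measure.pi_of_empty (fun _ : Fin 0 ↦ μ)]
  | succ n ih =>
    rw [← (measurePreserving_piFinSuccAbove (fun _ : Fin (n + 1) ↦ μ) 0).symm.lintegral_comp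
      (by fun_prop)]
    simp_rw [MeasurableEquiv.piFinSuccAbove_symm_apply, Fin.insertNthEquiv,
      Fin.prod_univ_succ, Fin.insertNth_zero, Equiv.coe_fn_mk, Fin.cons_succ, Fin.cons_zero,
      cast_eq]
    rw [lintegral_prod_mul (f := f) (g := fun y : Fin n → α ↦ ∏ i, f (y i)) hf.aemeasurable
      (Finset.measurable_prod _ fun i _ ↦ hf.comp (measurable_pi_apply i)).aemeasurable, ih,
      pow_succ']

theorem lintegral_exp_neg_mul_Ioi_zero {s : ℝ} (hs : 0 < s) :
    ∫⁻ t in Ioi 0, ENNReal.ofReal (exp (-(t * s))) = ENNReal.ofReal s⁻¹ := by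
  have h := integral_exp_mul_Ioi (neg_neg_of_pos hs) 0
  rw [mul_zero, exp_zero, neg_div_neg_eq, one_div] at h
  simp_rw [← mul_neg, mul_comm _ (-s)]
  rw [← h, ofReal_integral_eq_lintegral_ofReal (integrableOn_exp_mul_Ioi (neg_neg_of_pos hs) 0)
    (.of_forall fun _ ↦ (exp_pos _).le)]

theorem integral_exp_neg_mul_Icc_zero_one {t : ℝ} (ht : t ≠ 0) :
    ∫ u in Icc (0:ℝ) 1, exp (-(u * t)) = (1 - exp (-t)) / t := by
  rw [integral_Icc_eq_integral_Ioc, ← intervalIntegral.integral_of_le zero_le_one]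
  simp_rw [← mul_neg]
  rw [intervalIntegral.integral_comp_mul_right (fun u ↦ exp u) (neg_ne_zero.2 ht), integral_exp]
  rw [one_mul, zero_mul, exp_zero, smul_eq_mul, inv_neg]
  ring

theorem ae_sum_pos_restrict_unitCube (n : ℕ) [NeZero n] :
    ∀ᵐ x ∂(volume.restrict (univ.pi fun _ : Fin n ↦ Icc (0:ℝ) 1)), 0 < ∑ i, x i := by
  have hx0 : ∀ᵐ x : Fin n → ℝ, x 0 ≠ 0 := by
    rw [volume_pi]
    exact Measure.ae_eval_ne _ 0 0
  filter_upwards [ae_restrict_mem (MeasurableSet.univ_pi fun _ ↦ measurableSet_Icc),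
    ae_restrict_of_ae hx0] with x hx hx0
  have hnonneg : ∀ i, 0 ≤ x i := fun i ↦ (hx i (mem_univ i)).1
  exact (hnonneg 0).lt_of_ne' hx0 |>.trans_le <|
    Finset.single_le_sum (fun i _ ↦ hnonneg i) (Finset.mem_univ 0)

theorem lintegral_exp_neg_mul_sum_unitCube (n : ℕ) {t : ℝ} (ht : t ≠ 0) :
    ∫⁻ x in univ.pi (fun _ : Fin n ↦ Icc (0:ℝ) 1), ENNReal.ofReal (exp (-(t * ∑ i, x i))) =
      ENNReal.ofReal ((1 - exp (-t)) / t) ^ n := by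
  have hprod : ∀ x : Fin n → ℝ,
      ENNReal.ofReal (exp (-(t * ∑ i, x i))) = ∏ i, ENNReal.ofReal (exp (-(x i * t))) := by
    intro x
    rw [← ENNReal.ofReal_prod_of_nonneg fun i _ ↦ (exp_pos _).le, ← exp_sum, Finset.mul_sum,
      ← Finset.sum_neg_distrib]
    simp_rw [mul_comm t]
  have hint : IntegrableOn (fun u ↦ exp (-(u * t))) (Icc 0 1) :=
    (by fun_prop : Continuous fun u ↦ exp (-(u * t))).integrableOn_Icc
  simp_rw [hprod]
  rw [volume_pi, Measure.restrict_pi_pi, lintegral_pi_prod_eq_pow _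
      (f := fun u ↦ ENNReal.ofReal (exp (-(u * t)))) (by fun_prop),
    ← ofReal_integral_eq_lintegral_ofReal hint (.of_forall fun _ ↦ (exp_pos _).le),
    integral_exp_neg_mul_Icc_zero_one ht]

theorem lintegral_inv_sum_unitCube (n : ℕ) [NeZero n] :
    ∫⁻ x in univ.pi (fun _ : Fin n ↦ Icc (0:ℝ) 1), ENNReal.ofReal (∑ i, x i)⁻¹ =
      ∫⁻ t in Ioi 0, ENNReal.ofReal ((1 - exp (-t)) / t) ^ n :=
  calc _ = ∫⁻ x in univ.pi (fun _ : Fin n ↦ Icc (0:ℝ) 1), ∫⁻ t in Ioi 0,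
        ENNReal.ofReal (exp (-(t * ∑ i, x i))) :=
        lintegral_congr_ae <| (ae_sum_pos_restrict_unitCube n).mono fun x hx ↦
          (lintegral_exp_neg_mul_Ioi_zero hx).symm
    _ = ∫⁻ t in Ioi 0, ∫⁻ x in univ.pi (fun _ : Fin n ↦ Icc (0:ℝ) 1),
        ENNReal.ofReal (exp (-(t * ∑ i, x i))) :=
        lintegral_lintegral_swap (by fun_prop)
    _ = _ := setLIntegral_congr_fun measurableSet_Ioi fun t ht ↦
        lintegral_exp_neg_mul_sum_unitCube n (ne_of_gt ht)

theorem exp_neg_half_le_one_sub_exp_neg_div {t : ℝ} (ht : 0 < t) :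
    exp (-(t / 2)) ≤ (1 - exp (-t)) / t := by
  have hfactor : 1 - exp (-t) = exp (-(t / 2)) * (2 * sinh (t / 2)) := by
    have h1 : exp (-(t / 2)) * exp (t / 2) = 1 := by rw [← exp_add, neg_add_cancel, exp_zero]
    have h2 : exp (-(t / 2)) * exp (-(t / 2)) = exp (-t) := by rw [← exp_add]; ring_nf
    rw [sinh_eq]
    linear_combination h2 - h1
  rw [le_div_iff₀ ht, hfactor]
  have := self_lt_sinh_iff.2 (half_pos ht)
  gcongr
  linarith

theorem two_sub_le_two_add_mul_exp_neg {t : ℝ} (ht : 0 ≤ t) : 2 - t ≤ (2 + t) * exp (-t) := by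
  have hmono : Monotone fun s ↦ (2 + s) * exp (-s) + s := by
    refine monotone_of_hasDerivAt_nonneg (f' := fun s ↦ 1 - (1 + s) * exp (-s))
      (fun s ↦ ?_) (fun s ↦ ?_)
    · exact ((((hasDerivAt_id' s).const_add 2).mul (hasDerivAt_neg s).exp).add
        (hasDerivAt_id' s)).congr_deriv (by ring)
    · have : (1 + s) * exp (-s) ≤ exp s * exp (-s) := by
        gcongr
        linarith [add_one_le_exp s]
      rw [← exp_add, add_neg_cancel, exp_zero] at this
      exact sub_nonneg.2 this
  have := hmono ht
  simp only [add_zero, neg_zero, exp_zero, mul_one] at this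
  linarith

theorem one_sub_exp_neg_div_le_two_div_two_add {t : ℝ} (ht : 0 < t) :
    (1 - exp (-t)) / t ≤ 2 / (2 + t) := by
  rw [div_le_div_iff₀ ht (by linarith)]
  linarith [two_sub_le_two_add_mul_exp_neg ht.le]

theorem lintegral_exp_neg_half_pow (k : ℕ) [NeZero k] :
    ∫⁻ t in Ioi 0, ENNReal.ofReal (exp (-(t / 2))) ^ k = ENNReal.ofReal (2 / k) := by
  have hpow (t : ℝ) :
      ENNReal.ofReal (exp (-(t / 2))) ^ k = ENNReal.ofReal (exp (-(t * (k / 2)))) := by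
    rw [← ENNReal.ofReal_pow (exp_pos _).le, ← exp_nat_mul]
    ring_nf
  simp_rw [hpow]
  rw [lintegral_exp_neg_mul_Ioi_zero (by have := NeZero.pos k; positivity), inv_div]

theorem hasDerivAt_two_div_two_add_pow (m : ℕ) {t : ℝ} (ht : 2 + t ≠ 0) :
    HasDerivAt (fun t : ℝ ↦ -(2 / (m + 1)) * (2 / (2 + t)) ^ (m + 1))
      ((2 / (2 + t)) ^ (m + 2)) t := by
  refine ((((hasDerivAt_const t 2).div ((hasDerivAt_id' t).const_add 2) ht).pow (m + 1)).const_mul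
    _).congr_deriv ?_
  simp only [Pi.div_apply, Nat.add_sub_cancel, Nat.cast_add_one]
  rw [pow_add, div_pow 2 (2 + t) 2]
  field_simp
  ring

theorem lintegral_two_div_two_add_pow {k : ℕ} (hk : 2 ≤ k) :
    ∫⁻ t in Ioi 0, ENNReal.ofReal (2 / (2 + t)) ^ k = ENNReal.ofReal (2 / (k - 1)) := by
  obtain ⟨m, rfl⟩ := Nat.exists_eq_add_of_le' hk
  have hderiv : ∀ t ∈ Ici (0:ℝ), HasDerivAt (fun t : ℝ ↦ -(2 / (m + 1)) * (2 / (2 + t)) ^ (m + 1))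
      ((2 / (2 + t)) ^ (m + 2)) t :=
    fun t ht ↦ hasDerivAt_two_div_two_add_pow m (by linarith [mem_Ici.1 ht])
  have hnonneg : ∀ t ∈ Ioi (0:ℝ), 0 ≤ (2 / (2 + t)) ^ (m + 2) := fun t ht ↦ by
    have : 0 < t := ht
    positivity
  have hlim : Tendsto (fun t : ℝ ↦ -(2 / (m + 1)) * (2 / (2 + t)) ^ (m + 1)) atTop (𝓝 0) := by
    have h : Tendsto (fun t : ℝ ↦ 2 / (2 + t)) atTop (𝓝 0) :=
      tendsto_const_nhds.div_atTop (tendsto_atTop_add_const_left _ 2 tendsto_id)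
    simpa using (h.pow (m + 1)).const_mul (-(2 / (m + 1) : ℝ))
  calc ∫⁻ t in Ioi 0, ENNReal.ofReal (2 / (2 + t)) ^ (m + 2)
      = ∫⁻ t in Ioi 0, ENNReal.ofReal ((2 / (2 + t)) ^ (m + 2)) :=
        setLIntegral_congr_fun measurableSet_Ioi fun t ht ↦
          (ENNReal.ofReal_pow (by have : 0 < t := ht; positivity) _).symm
    _ = ENNReal.ofReal (∫ t in Ioi 0, (2 / (2 + t)) ^ (m + 2)) :=
        (ofReal_integral_eq_lintegral_ofReal (integrableOn_Ioi_deriv_of_nonneg' hderiv hnonneg hlim)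
          ((ae_restrict_mem measurableSet_Ioi).mono hnonneg)).symm
    _ = ENNReal.ofReal (2 / ((m + 2 : ℕ) - 1)) := by
      rw [integral_Ioi_of_hasDerivAt_of_nonneg' hderiv hnonneg hlim]
      push_cast
      ring_nf

/-- For `U₁,…,U_k` i.i.d. Uniform[0,1] with `k ≥ 2`,
`2/k ≤ E[1/(U₁+⋯+U_k)] ≤ 2/(k-1)`. -/
theorem uniform_sum_inverse_moment_bounds (k : ℕ) (hk : 2 ≤ k) :
    2 / (k : ℝ) ≤
      (∫ x in (Set.univ.pi fun _ : Fin k => Set.Icc (0:ℝ) 1), (∑ i, x i)⁻¹) ∧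
    (∫ x in (Set.univ.pi fun _ : Fin k => Set.Icc (0:ℝ) 1), (∑ i, x i)⁻¹) ≤
      2 / ((k : ℝ) - 1) := by
  have : NeZero k := ⟨by omega⟩
  set L := ∫⁻ x in univ.pi (fun _ : Fin k ↦ Icc (0:ℝ) 1), ENNReal.ofReal (∑ i, x i)⁻¹
  have hL : L = ∫⁻ t in Ioi 0, ENNReal.ofReal ((1 - exp (-t)) / t) ^ k :=
    lintegral_inv_sum_unitCube k
  have hlower : ENNReal.ofReal (2 / k) ≤ L := by
    rw [hL, ← lintegral_exp_neg_half_pow k]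
    exact setLIntegral_mono' measurableSet_Ioi fun t ht ↦
      pow_le_pow_left' (ENNReal.ofReal_le_ofReal (exp_neg_half_le_one_sub_exp_neg_div ht)) k
  have hupper : L ≤ ENNReal.ofReal (2 / (k - 1)) := by
    rw [hL, ← lintegral_two_div_two_add_pow hk]
    exact setLIntegral_mono' measurableSet_Ioi fun t ht ↦
      pow_le_pow_left' (ENNReal.ofReal_le_ofReal (one_sub_exp_neg_div_le_two_div_two_add ht)) k
  have hintegral : ∫ x in univ.pi (fun _ : Fin k ↦ Icc (0:ℝ) 1), (∑ i, x i)⁻¹ = L.toReal :=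
    integral_eq_lintegral_of_nonneg_ae
      ((ae_sum_pos_restrict_unitCube k).mono fun x hx ↦ (inv_pos.2 hx).le)
      (by fun_prop : Measurable fun x : Fin k → ℝ ↦ (∑ i, x i)⁻¹).aestronglyMeasurable
  rw [hintegral]
  exact ⟨(ENNReal.ofReal_le_iff_le_toReal (ne_top_of_le_ne_top ENNReal.ofReal_ne_top hupper)).1
    hlower, ENNReal.toReal_le_of_le_ofReal
    (div_nonneg zero_le_two (sub_nonneg.2 (mod_cast hk.trans' one_le_two))) hupper⟩
end

section
/- Suppose p₁, …, pₘ are mutually independent random variables in [0,1] and for each index h in a set H₀ of size m₀ ≥ 1, pₕ is super-uniform (P(pₕ ≤ t) ≤ t for all t ∈ [0,1]). Let g : [0,1] → [0,1] be non-decreasing with ν = E[g(U)] > 0 for U ~ Uniform[0,1], and define m̂₀(p) = (1 + Σᵢ g(pᵢ))/ν. Then for every h ∈ H₀, E[1/m̂₀(p_{0,h})] ≤ 1/m₀, where p_{0,h} is the vector p with pₕ replaced by 0. -/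
/-!
Since `g` is non-decreasing, `ν / m̂₀(p_{0,h})` is antitone in every p-value, and a super-uniform
p-value is stochastically larger than a uniform one. By independence, replacing each null p-value
by an independent uniform, and then dropping the non-null terms from `m̂₀`, can only increase the
expectation. For i.i.d. uniform nulls `U_i`, write `ν = E[g(U_h)]` and use `1 + g(0) ≥ g(U_h)`:
`E[1 / m̂₀] ≤ E[g(U_h) / Σ_{i ∈ H₀} g(U_i)]`. By exchangeability the right side is the same for
every `h ∈ H₀`, and these `m₀` expectations sum to at most `1`.
-/

open MeasureTheory Set ProbabilityTheory
open scoped ENNReal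

instance : IsProbabilityMeasure (volume.restrict (Icc (0:ℝ) 1)) :=
  ⟨by simp⟩

theorem measure_le_restrict_Icc_of_isLowerSet {ρ : Measure ℝ} [IsProbabilityMeasure ρ]
    (hρ : ∀ t ∈ Icc (0:ℝ) 1, ρ (Iic t) ≤ ENNReal.ofReal t) {S : Set ℝ} (hS : IsLowerSet S) :
    ρ S ≤ volume.restrict (Icc 0 1) S := by
  rw [Measure.restrict_apply' measurableSet_Icc]
  rcases S.eq_empty_or_nonempty with rfl | hne
  · simp
  by_cases hbdd : BddAbove S
  · set c := sSup S
    have hIic : ρ (Iic c) ≤ ENNReal.ofReal (min c 1) := by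
      rcases lt_or_ge c 0 with hc | hc
      · calc ρ (Iic c) ≤ ρ (Iic 0) := measure_mono (Iic_subset_Iic.2 hc.le)
          _ ≤ ENNReal.ofReal 0 := hρ 0 ⟨le_rfl, zero_le_one⟩
          _ = ENNReal.ofReal (min c 1) := by
            rw [ENNReal.ofReal_zero, ENNReal.ofReal_of_nonpos (by simp [hc.le])]
      rcases le_total c 1 with hc1 | hc1
      · rw [min_eq_left hc1]; exact hρ c ⟨hc, hc1⟩
      · rw [min_eq_right hc1, ENNReal.ofReal_one]; exact prob_le_one
    calc ρ S ≤ ρ (Iic c) := measure_mono fun x hx => le_csSup hbdd hx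
      _ ≤ ENNReal.ofReal (min c 1) := hIic
      _ = volume (Ico 0 (min c 1)) := by rw [Real.volume_Ico, sub_zero]
      _ ≤ volume (S ∩ Icc 0 1) := by
        refine measure_mono fun x hx => ⟨?_, hx.1, hx.2.le.trans (min_le_right _ _)⟩
        obtain ⟨y, hyS, hxy⟩ := exists_lt_of_lt_csSup hne (hx.2.trans_le (min_le_left _ _))
        exact hS hxy.le hyS
  · have hsub : Icc 0 1 ⊆ S := fun x _ => by
      obtain ⟨y, hyS, hxy⟩ := not_bddAbove_iff.mp hbdd x
      exact hS hxy.le hyS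
    rw [inter_eq_right.2 hsub, Real.volume_Icc, sub_zero, ENNReal.ofReal_one]
    exact prob_le_one

theorem lintegral_le_of_forall_isLowerSet {ρ ρ' : Measure ℝ}
    (h : ∀ S, IsLowerSet S → ρ S ≤ ρ' S) {φ : ℝ → ℝ≥0∞} (hφ : Antitone φ) :
    ∫⁻ a, φ a ∂ρ ≤ ∫⁻ a, φ a ∂ρ' := by
  -- Truncate so that the real-valued layer-cake formula applies.
  have htrunc (n : ℕ) : ∫⁻ a, min (φ a) n ∂ρ ≤ ∫⁻ a, min (φ a) n ∂ρ' := by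
    have hfin (a : ℝ) : min (φ a) n ≠ ∞ :=
      ((min_le_right _ _).trans_lt (ENNReal.natCast_lt_top n)).ne
    set ψ : ℝ → ℝ := fun a => (min (φ a) n).toReal
    have hψ (a : ℝ) : ENNReal.ofReal (ψ a) = min (φ a) n := ENNReal.ofReal_toReal (hfin a)
    have hψanti : Antitone ψ := fun a b hab =>
      ENNReal.toReal_mono (hfin a) (min_le_min_right _ (hφ hab))
    simp_rw [← hψ]
    rw [lintegral_eq_lintegral_meas_lt ρ (.of_forall fun _ => ENNReal.toReal_nonneg)
        hψanti.measurable.aemeasurable,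
      lintegral_eq_lintegral_meas_lt ρ' (.of_forall fun _ => ENNReal.toReal_nonneg)
        hψanti.measurable.aemeasurable]
    exact lintegral_mono fun t => h _ fun a b hba hb => hb.trans_le (hψanti hba)
  have hsup (a : ℝ) : ⨆ n : ℕ, min (φ a) n = φ a := by
    rw [← inf_iSup_eq, ENNReal.iSup_natCast, inf_top_eq]
  have hmono : Monotone fun (n : ℕ) a => min (φ a) n := fun m n hmn a =>
    min_le_min_left _ (by exact_mod_cast hmn)
  have hmeas (n : ℕ) : Measurable fun a => min (φ a) n := hφ.measurable.min measurable_const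
  calc ∫⁻ a, φ a ∂ρ = ⨆ n : ℕ, ∫⁻ a, min (φ a) n ∂ρ := by
        rw [← lintegral_iSup hmeas hmono]; simp only [hsup]
    _ ≤ ⨆ n : ℕ, ∫⁻ a, min (φ a) n ∂ρ' := iSup_mono htrunc
    _ = ∫⁻ a, φ a ∂ρ' := by rw [← lintegral_iSup hmeas hmono]; simp only [hsup]

theorem ofReal_inv_add_sum_le {ι : Type*} {G : ℝ → ℝ} (hG : Monotone G) (hG0 : ∀ u, 0 ≤ G u)
    {c : ℝ} (hc : 0 < c) {s t : Finset ι} (hst : s ⊆ t) {x y : ι → ℝ} (hxy : x ≤ y) :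
    ENNReal.ofReal (c + ∑ i ∈ t, G (y i))⁻¹ ≤ ENNReal.ofReal (c + ∑ i ∈ s, G (x i))⁻¹ := by
  have hsum : ∑ i ∈ s, G (x i) ≤ ∑ i ∈ t, G (y i) :=
    (Finset.sum_le_sum fun i _ => hG (hxy i)).trans
      (Finset.sum_le_sum_of_subset_of_nonneg hst fun i _ _ => hG0 _)
  have hpos : 0 < c + ∑ i ∈ s, G (x i) :=
    add_pos_of_pos_of_nonneg hc (Finset.sum_nonneg fun i _ => hG0 _)
  exact ENNReal.ofReal_le_ofReal (inv_anti₀ hpos (by linarith))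

section Pi

variable {ι α : Type*} [MeasurableSpace α]

theorem lintegral_pi_comp_perm [Fintype ι] (κ : ι → Measure α) [∀ i, SigmaFinite (κ i)]
    (σ : Equiv.Perm ι) (hσ : ∀ i, κ (σ i) = κ i) (f : (ι → α) → ℝ≥0∞) :
    ∫⁻ x, f (x ∘ σ) ∂Measure.pi κ = ∫⁻ x, f x ∂Measure.pi κ := by
  have hκ : (fun i => κ (σ.symm i)) = κ := funext fun i => by
    rw [← hσ (σ.symm i), Equiv.apply_symm_apply]
  have hmp := measurePreserving_piCongrLeft κ σ.symm
  rw [hκ] at hmp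
  have he (x : ι → α) : MeasurableEquiv.piCongrLeft (fun _ => α) σ.symm x = x ∘ σ := by
    ext i
    rw [MeasurableEquiv.coe_piCongrLeft]
    simpa using Equiv.piCongrLeft_apply_apply (P := fun _ => α) σ.symm x (σ i)
  rw [MeasurePreserving.lintegral_map_equiv f _ hmp]
  simp only [he]

variable [DecidableEq ι]

theorem antitone_lmarginal (κ : ι → Measure ℝ) (s : Finset ι) {f : (ι → ℝ) → ℝ≥0∞}
    (hf : Antitone f) : Antitone (∫⋯∫⁻_s, f ∂κ) := fun x y hxy =>
  lintegral_mono fun z => hf fun i => by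
    simp only [Function.updateFinset]; split_ifs
    exacts [le_rfl, hxy i]

theorem lmarginal_le_of_forall_isLowerSet {κ₁ κ₂ : ι → Measure ℝ}
    [∀ i, SigmaFinite (κ₁ i)] [∀ i, SigmaFinite (κ₂ i)]
    (h : ∀ i S, IsLowerSet S → κ₁ i S ≤ κ₂ i S) {f : (ι → ℝ) → ℝ≥0∞}
    (hf : Antitone f) (hfm : Measurable f) (s : Finset ι) :
    ∫⋯∫⁻_s, f ∂κ₁ ≤ ∫⋯∫⁻_s, f ∂κ₂ := by
  induction s using Finset.induction_on with
  | empty => simp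
  | insert i s hi ih =>
    intro x
    rw [lmarginal_insert _ hfm hi, lmarginal_insert _ hfm hi]
    calc ∫⁻ a, (∫⋯∫⁻_s, f ∂κ₁) (Function.update x i a) ∂κ₁ i
        ≤ ∫⁻ a, (∫⋯∫⁻_s, f ∂κ₂) (Function.update x i a) ∂κ₁ i :=
          lintegral_mono fun a => ih _
      _ ≤ ∫⁻ a, (∫⋯∫⁻_s, f ∂κ₂) (Function.update x i a) ∂κ₂ i :=
        lintegral_le_of_forall_isLowerSet (h i)
          ((antitone_lmarginal κ₂ s hf).comp_monotone Function.update_mono)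

variable [Fintype ι]

theorem lintegral_pi_le_of_forall_isLowerSet {κ₁ κ₂ : ι → Measure ℝ}
    [∀ i, SigmaFinite (κ₁ i)] [∀ i, SigmaFinite (κ₂ i)]
    (h : ∀ i S, IsLowerSet S → κ₁ i S ≤ κ₂ i S) {f : (ι → ℝ) → ℝ≥0∞}
    (hf : Antitone f) (hfm : Measurable f) :
    ∫⁻ x, f x ∂Measure.pi κ₁ ≤ ∫⁻ x, f x ∂Measure.pi κ₂ := by
  simp_rw [lintegral_eq_lmarginal_univ (0 : ι → ℝ)]
  exact lmarginal_le_of_forall_isLowerSet h hf hfm _ _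

theorem lintegral_pi_eq_lintegral_update (κ : ι → Measure α) [∀ i, IsProbabilityMeasure (κ i)]
    (j : ι) {f : (ι → α) → ℝ≥0∞} (hf : Measurable f) :
    ∫⁻ x, f x ∂Measure.pi κ = ∫⁻ x, ∫⁻ a, f (Function.update x j a) ∂κ j ∂Measure.pi κ := by
  rcases isEmpty_or_nonempty (ι → α) with hempty | ⟨⟨x₀⟩⟩
  · simp [lintegral_of_isEmpty]
  have hfj : Measurable fun x => ∫⁻ a, f (Function.update x j a) ∂κ j := by
    rw [← lmarginal_singleton]; exact hf.lmarginal κ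
  rw [lintegral_eq_lmarginal_univ x₀, lintegral_eq_lmarginal_univ x₀,
    lmarginal_erase' _ hf (Finset.mem_univ j), lmarginal_erase' _ hfj (Finset.mem_univ j)]
  simp only [Function.update_idem, lintegral_const, measure_univ, mul_one]

theorem lintegral_div_sum_le_inv_card (κ : ι → Measure ℝ) [∀ i, IsProbabilityMeasure (κ i)]
    {H : Finset ι} {h : ι} (hh : h ∈ H) (hκ : ∀ i ∈ H, κ i = κ h) {G : ℝ → ℝ}
    (hGm : Measurable G) (hG0 : ∀ u, 0 ≤ G u) :
    ∫⁻ x, ENNReal.ofReal (G (x h) / ∑ i ∈ H, G (x i)) ∂Measure.pi κ ≤ (H.card : ℝ≥0∞)⁻¹ := by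
  set S : (ι → ℝ) → ℝ := fun x => ∑ i ∈ H, G (x i)
  set Φ : ι → (ι → ℝ) → ℝ≥0∞ := fun k x => ENNReal.ofReal (G (x k) / S x)
  have hexch (k : ι) (hk : k ∈ H) :
      ∫⁻ x, Φ k x ∂Measure.pi κ = ∫⁻ x, Φ h x ∂Measure.pi κ := by
    have hσ (i : ι) : κ (Equiv.swap h k i) = κ i := by
      rw [Equiv.swap_apply_def]
      split_ifs with h1 h2
      · rw [h1, hκ k hk]
      · rw [h2, hκ k hk]
      · rfl
    have hSσ (x : ι → ℝ) : S (x ∘ Equiv.swap h k) = S x := by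
      refine Equiv.Perm.sum_comp _ H (fun i => G (x i)) fun i hi => ?_
      by_contra hiH
      exact hi (Equiv.swap_apply_of_ne_of_ne (fun e => hiH (e ▸ hh)) (fun e => hiH (e ▸ hk)))
    rw [← lintegral_pi_comp_perm κ _ hσ (Φ h)]
    simp only [Φ, hSσ, Function.comp_apply, Equiv.swap_apply_left]
  have hsum (x : ι → ℝ) : ∑ k ∈ H, Φ k x ≤ 1 := by
    rw [← ENNReal.ofReal_sum_of_nonneg fun k _ =>
        div_nonneg (hG0 _) (Finset.sum_nonneg fun i _ => hG0 _), ← Finset.sum_div]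
    exact ENNReal.ofReal_le_one.2 (div_self_le_one _)
  rw [ENNReal.le_inv_iff_mul_le]
  calc (∫⁻ x, Φ h x ∂Measure.pi κ) * H.card = ∑ k ∈ H, ∫⁻ x, Φ k x ∂Measure.pi κ := by
        rw [Finset.sum_congr rfl hexch, Finset.sum_const, nsmul_eq_mul, mul_comm]
    _ = ∫⁻ x, ∑ k ∈ H, Φ k x ∂Measure.pi κ :=
      (lintegral_finsetSum _ fun k _ => by fun_prop).symm
    _ ≤ ∫⁻ _, 1 ∂Measure.pi κ := lintegral_mono hsum
    _ = 1 := by simp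

theorem lintegral_mul_lintegral_inv_add_sum_erase_le_inv_card (κ : ι → Measure ℝ)
    [∀ i, IsProbabilityMeasure (κ i)] {H : Finset ι} {h : ι} (hh : h ∈ H)
    (hκ : ∀ i ∈ H, κ i = κ h) {G : ℝ → ℝ} (hGm : Measurable G) (hG0 : ∀ u, 0 ≤ G u)
    {c : ℝ} (hGc : ∀ u, G u ≤ c) :
    (∫⁻ a, ENNReal.ofReal (G a) ∂κ h) *
        ∫⁻ x, ENNReal.ofReal (c + ∑ i ∈ H.erase h, G (x i))⁻¹ ∂Measure.pi κ ≤
      (H.card : ℝ≥0∞)⁻¹ := by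
  set T : (ι → ℝ) → ℝ := fun x => ∑ i ∈ H.erase h, G (x i)
  have hT_update (x : ι → ℝ) (a : ℝ) : T (Function.update x h a) = T x :=
    Finset.sum_congr rfl fun i hi => by rw [Function.update_of_ne (Finset.ne_of_mem_erase hi)]
  have hpoint (x : ι → ℝ) :
      G (x h) / (c + T x) ≤ G (x h) / ∑ i ∈ H, G (x i) := by
    rcases (hG0 (x h)).eq_or_lt with hzero | hpos
    · simp [← hzero]
    · have hT : 0 ≤ T x := Finset.sum_nonneg fun i _ => hG0 _
      rw [← Finset.add_sum_erase H _ hh]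
      exact div_le_div_of_nonneg_left hpos.le (by linarith) (by linarith [hGc (x h)])
  calc (∫⁻ a, ENNReal.ofReal (G a) ∂κ h) * ∫⁻ x, ENNReal.ofReal (c + T x)⁻¹ ∂Measure.pi κ
      = ∫⁻ x, ∫⁻ a, ENNReal.ofReal (G a) * ENNReal.ofReal (c + T x)⁻¹ ∂κ h ∂Measure.pi κ := by
        rw [← lintegral_const_mul _ (by fun_prop)]
        exact lintegral_congr fun x =>
          (lintegral_mul_const _ (ENNReal.measurable_ofReal.comp hGm)).symm
    _ = ∫⁻ x, ENNReal.ofReal (G (x h) / (c + T x)) ∂Measure.pi κ := by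
        conv_rhs => rw [lintegral_pi_eq_lintegral_update κ h (by fun_prop)]
        simp only [Function.update_self, hT_update, div_eq_mul_inv, ENNReal.ofReal_mul (hG0 _)]
    _ ≤ ∫⁻ x, ENNReal.ofReal (G (x h) / ∑ i ∈ H, G (x i)) ∂Measure.pi κ :=
        lintegral_mono fun x => ENNReal.ofReal_le_ofReal (hpoint x)
    _ ≤ (H.card : ℝ≥0∞)⁻¹ := lintegral_div_sum_le_inv_card κ hh hκ hGm hG0

theorem lintegral_mul_lintegral_inv_add_sum_erase_le_inv_card_of_superUniform
    (ρ : ι → Measure ℝ) [∀ i, IsProbabilityMeasure (ρ i)] {H : Finset ι}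
    (hρ : ∀ i ∈ H, ∀ t ∈ Icc (0:ℝ) 1, ρ i (Iic t) ≤ ENNReal.ofReal t)
    {G : ℝ → ℝ} (hG : Monotone G) (hG01 : ∀ u, G u ∈ Icc (0:ℝ) 1) {h : ι} (hh : h ∈ H) :
    (∫⁻ u in Icc 0 1, ENNReal.ofReal (G u)) *
        ∫⁻ x, ENNReal.ofReal (1 + G 0 + ∑ i ∈ Finset.univ.erase h, G (x i))⁻¹ ∂Measure.pi ρ ≤
      (H.card : ℝ≥0∞)⁻¹ := by
  set κ : ι → Measure ℝ := fun i => if i ∈ H then volume.restrict (Icc 0 1) else ρ i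
  have (i : ι) : IsProbabilityMeasure (κ i) := by dsimp only [κ]; split_ifs <;> infer_instance
  have hdom (i : ι) (S : Set ℝ) (hS : IsLowerSet S) : ρ i S ≤ κ i S := by
    dsimp only [κ]
    split_ifs with hi
    exacts [measure_le_restrict_Icc_of_isLowerSet (hρ i hi) hS, le_rfl]
  have hG0 (u : ℝ) : 0 ≤ G u := (hG01 u).1
  have hGm : Measurable G := hG.measurable
  have hc : 0 < 1 + G 0 := by linarith [hG0 0]
  calc _ ≤ (∫⁻ u in Icc 0 1, ENNReal.ofReal (G u)) *
        ∫⁻ x, ENNReal.ofReal (1 + G 0 + ∑ i ∈ Finset.univ.erase h, G (x i))⁻¹ ∂Measure.pi κ :=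
        mul_le_mul_right (lintegral_pi_le_of_forall_isLowerSet hdom
          (fun x y hxy => ofReal_inv_add_sum_le hG hG0 hc subset_rfl hxy) (by fun_prop)) _
    _ ≤ (∫⁻ u in Icc 0 1, ENNReal.ofReal (G u)) *
        ∫⁻ x, ENNReal.ofReal (1 + G 0 + ∑ i ∈ H.erase h, G (x i))⁻¹ ∂Measure.pi κ :=
        mul_le_mul_right (lintegral_mono fun x => ofReal_inv_add_sum_le hG hG0 hc
          (Finset.erase_subset_erase h H.subset_univ) le_rfl) _
    _ ≤ (H.card : ℝ≥0∞)⁻¹ := by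
      simpa only [κ, hh, if_true] using lintegral_mul_lintegral_inv_add_sum_erase_le_inv_card κ hh
        (fun i hi => by simp only [κ, hi, hh, if_true]) hGm hG0
        (fun u => by linarith [(hG01 u).2, hG0 0])

end Pi

theorem lintegral_Icc_ofReal_eq_intervalIntegral {G : ℝ → ℝ} {a b : ℝ} (hab : a ≤ b)
    (hG0 : ∀ u, 0 ≤ G u) (hGi : IntegrableOn G (Icc a b)) :
    ∫⁻ u in Icc a b, ENNReal.ofReal (G u) = ENNReal.ofReal (∫ u in a..b, G u) := by
  rw [← ofReal_integral_eq_lintegral_ofReal hGi (.of_forall hG0),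
    intervalIntegral.integral_of_le hab, integral_Icc_eq_integral_Ioc]

theorem integral_comp_eq_toReal_lintegral_pi {Ω ι β : Type*} [MeasurableSpace Ω]
    [MeasurableSpace β] [Fintype ι] {μ : Measure Ω} [IsProbabilityMeasure μ] {X : ι → Ω → β}
    (hX : ∀ i, Measurable (X i)) (hindep : iIndepFun X μ) {F : (ι → β) → ℝ} (hF0 : 0 ≤ F)
    (hFm : Measurable F) :
    ∫ ω, F (fun i => X i ω) ∂μ =
      (∫⁻ x, ENNReal.ofReal (F x) ∂Measure.pi fun i => μ.map (X i)).toReal := by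
  have htuple : Measurable fun ω i => X i ω := measurable_pi_lambda _ hX
  rw [← hindep.map_fun_eq_pi_map fun i => (hX i).aemeasurable, lintegral_map (by fun_prop) htuple]
  exact integral_eq_lintegral_of_nonneg_ae (.of_forall fun ω => hF0 _)
    (hFm.comp htuple).aestronglyMeasurable

theorem integral_div_add_sum_erase_le_inv_card {Ω : Type*} [MeasurableSpace Ω] {μ : Measure Ω}
    [IsProbabilityMeasure μ] {m : ℕ} {p : Fin m → Ω → ℝ} (hmeas : ∀ i, Measurable (p i))
    (hindep : iIndepFun p μ) {H₀ : Finset (Fin m)}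
    (hsup : ∀ h ∈ H₀, ∀ t ∈ Icc (0:ℝ) 1, μ {ω | p h ω ≤ t} ≤ ENNReal.ofReal t)
    {G : ℝ → ℝ} (hG : Monotone G) (hG01 : ∀ u, G u ∈ Icc (0:ℝ) 1) {h : Fin m} (hh : h ∈ H₀) :
    ∫ ω, (∫ u in (0:ℝ)..1, G u) / (1 + G 0 + ∑ i ∈ Finset.univ.erase h, G (p i ω)) ∂μ ≤
      1 / (H₀.card : ℝ) := by
  set ν := ∫ u in (0:ℝ)..1, G u
  have hνG : ∫⁻ u in Icc 0 1, ENNReal.ofReal (G u) = ENNReal.ofReal ν :=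
    lintegral_Icc_ofReal_eq_intervalIntegral zero_le_one (fun u => (hG01 u).1)
      ((hG.monotoneOn _).integrableOn_isCompact isCompact_Icc)
  have hν₀ : 0 ≤ ν := intervalIntegral.integral_nonneg zero_le_one fun u _ => (hG01 u).1
  set ρ : Fin m → Measure ℝ := fun i => μ.map (p i)
  have (i : Fin m) : IsProbabilityMeasure (ρ i) :=
    Measure.isProbabilityMeasure_map (hmeas i).aemeasurable
  have hρ (i : Fin m) (hi : i ∈ H₀) (t : ℝ) (ht : t ∈ Icc (0:ℝ) 1) :
      ρ i (Iic t) ≤ ENNReal.ofReal t := by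
    rw [Measure.map_apply (hmeas i) measurableSet_Iic]; exact hsup i hi t ht
  set D : (Fin m → ℝ) → ℝ := fun x => 1 + G 0 + ∑ i ∈ Finset.univ.erase h, G (x i)
  have hD (x : Fin m → ℝ) : 0 < D x := by
    linarith [(hG01 0).1, Finset.sum_nonneg fun i (_ : i ∈ Finset.univ.erase h) => (hG01 (x i)).1]
  have hGm : Measurable G := hG.measurable
  have hDm : Measurable fun x => ν / D x := by fun_prop
  have hcard : (0 : ℝ) < H₀.card := Nat.cast_pos.2 (Finset.card_pos.2 ⟨h, hh⟩)
  rw [integral_comp_eq_toReal_lintegral_pi hmeas hindep (fun x => div_nonneg hν₀ (hD x).le) hDm]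
  refine ENNReal.toReal_le_of_le_ofReal (by positivity) ?_
  rw [one_div, ENNReal.ofReal_inv_of_pos hcard, ENNReal.ofReal_natCast]
  simp_rw [div_eq_mul_inv, ENNReal.ofReal_mul hν₀]
  rw [lintegral_const_mul' _ _ ENNReal.ofReal_ne_top, ← hνG]
  exact lintegral_mul_lintegral_inv_add_sum_erase_le_inv_card_of_superUniform ρ hρ hG hG01 hh

theorem imc_for_homogeneous_class_general
    {Ω : Type*} [MeasurableSpace Ω] (μ : Measure Ω) [IsProbabilityMeasure μ]
    (m : ℕ) (p : Fin m → Ω → ℝ) (hmeas : ∀ i, Measurable (p i))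
    (hindep : iIndepFun p μ)
    (hrange : ∀ i, ∀ᵐ ω ∂μ, p i ω ∈ Set.Icc (0:ℝ) 1)
    (H₀ : Finset (Fin m)) (m₀ : ℕ) (hcard : H₀.card = m₀)
    (hsup : ∀ h ∈ H₀, ∀ t ∈ Set.Icc (0:ℝ) 1, μ {ω | p h ω ≤ t} ≤ ENNReal.ofReal t)
    (g : ℝ → ℝ) (hmono : MonotoneOn g (Set.Icc 0 1))
    (hg01 : ∀ u ∈ Set.Icc (0:ℝ) 1, g u ∈ Set.Icc (0:ℝ) 1)
    (ν : ℝ) (hν : ν = ∫ u in (0:ℝ)..1, g u) :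
    ∀ h ∈ H₀,
      ∫ ω, ν / (1 + (g 0 + ∑ i ∈ Finset.univ.erase h, g (p i ω))) ∂μ ≤ 1 / (m₀ : ℝ) := by
  intro h hh
  set G : ℝ → ℝ := IccExtend zero_le_one fun u : Icc (0:ℝ) 1 => g u
  have hGg : EqOn G g (Icc 0 1) := fun u hu => IccExtend_of_mem _ _ hu
  have hG01 (u : ℝ) : G u ∈ Icc (0:ℝ) 1 := hg01 _ (projIcc 0 1 zero_le_one u).2
  have hGmono : Monotone G := (monotoneOn_iff_monotone.1 hmono).IccExtend _
  have hνG : ν = ∫ u in (0:ℝ)..1, G u := by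
    rw [hν]
    exact intervalIntegral.integral_congr (by rw [uIcc_of_le zero_le_one]; exact hGg.symm)
  calc ∫ ω, ν / (1 + (g 0 + ∑ i ∈ Finset.univ.erase h, g (p i ω))) ∂μ
      = ∫ ω, ν / (1 + G 0 + ∑ i ∈ Finset.univ.erase h, G (p i ω)) ∂μ := by
        refine integral_congr_ae ?_
        filter_upwards [ae_all_iff.2 hrange] with ω hω
        simp only [hGg ⟨le_rfl, zero_le_one⟩, fun i => hGg (hω i), add_assoc]
    _ ≤ 1 / (m₀ : ℝ) := by
        rw [hνG, ← hcard]
        exact integral_div_add_sum_erase_le_inv_card hmeas hindep hsup hGmono hG01 hh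

/-- Inverse moment criterion for the homogeneous class `F₀`: for independent
super-uniform null p-values and `m̂₀(p) = (1 + Σᵢ g(pᵢ))/ν`, one has
`E[1/m̂₀(p_{0,h})] ≤ 1/m₀` for every null index `h`. -/
theorem imc_for_homogeneous_class
    {Ω : Type*} [MeasurableSpace Ω] (μ : Measure Ω) [IsProbabilityMeasure μ]
    (m : ℕ) (p : Fin m → Ω → ℝ) (hmeas : ∀ i, Measurable (p i))
    (hindep : iIndepFun p μ)
    (hrange : ∀ i, ∀ᵐ ω ∂μ, p i ω ∈ Set.Icc (0:ℝ) 1)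
    (H₀ : Finset (Fin m)) (m₀ : ℕ) (hcard : H₀.card = m₀) (hm₀ : 1 ≤ m₀)
    (hsup : ∀ h ∈ H₀, ∀ t ∈ Set.Icc (0:ℝ) 1, μ {ω | p h ω ≤ t} ≤ ENNReal.ofReal t)
    (g : ℝ → ℝ) (hmono : MonotoneOn g (Set.Icc 0 1))
    (hg01 : ∀ u ∈ Set.Icc (0:ℝ) 1, g u ∈ Set.Icc (0:ℝ) 1)
    (ν : ℝ) (hν : ν = ∫ u in (0:ℝ)..1, g u) (hνpos : 0 < ν) :
    ∀ h ∈ H₀,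
      ∫ ω, ν / (1 + (g 0 + ∑ i ∈ Finset.univ.erase h, g (p i ω))) ∂μ ≤ 1 / (m₀ : ℝ) :=
  imc_for_homogeneous_class_general μ m p hmeas hindep hrange H₀ m₀ hcard hsup g hmono hg01 ν hν
end

section
/- Suppose p₁, …, pₘ are mutually independent in [0,1] with pₕ super-uniform for each h in H₀, |H₀| = m₀ ≥ 1. Let g₁,…,gₘ : [0,1] → [0,1] be non-decreasing with νᵢ = E[gᵢ(U)] > 0 (U ~ Uniform[0,1]), and define m̂₀(p) = 1/min(ν₁,…,νₘ) + Σᵢ gᵢ(pᵢ)/νᵢ. Then for every h ∈ H₀, E[1/m̂₀(p_{0,h})] ≤ 1/m₀, where p_{0,h} denotes p with pₕ replaced by 0. -/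
/-!
Put `q = min νᵢ`, `c = 1/q ≥ 1` and `Yᵢ = gᵢ(pᵢ)/νᵢ ∈ [0, c]`. For a null index,
super-uniformity of `pᵢ` and monotonicity of `gᵢ` give `E Yᵢ ≥ ∫₀¹ gᵢ / νᵢ = 1`. For the
denominator `D = m̂₀(p_{0,h})` write `1/D = ∫₀^∞ e^{-sD} ds`; independence factorises
`E e^{-sD}`, the chord of the convex map `y ↦ e^{-sy}` on `[0, c]` bounds each null factor by
`1 - (1 - e^{-cs})/c` and the other factors by `1`, and the constant part of `D` is at least `c`.
The bound `e^{-cs} (1 - (1 - e^{-cs})/c)^(m₀-1)` integrates in closed form to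
`(1 - (1 - q)^m₀)/m₀ ≤ 1/m₀`.
-/

open MeasureTheory Set ProbabilityTheory Filter Topology
open scoped ENNReal

lemma Real.exp_neg_mul_le_chord {y c s : ℝ} (hc : 0 < c) (hy0 : 0 ≤ y) (hyc : y ≤ c) :
    Real.exp (-(y * s)) ≤ 1 - y / c * (1 - Real.exp (-(c * s))) := by
  have ht0 : 0 ≤ y / c := div_nonneg hy0 hc.le
  have ht1 : y / c ≤ 1 := (div_le_one hc).2 hyc
  have h := convexOn_exp.2 (mem_univ (0:ℝ)) (mem_univ (-(c * s)))
    (by linarith : (0:ℝ) ≤ 1 - y / c) ht0 (by ring)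
  have harg : (1 - y / c) • (0:ℝ) + (y / c) • (-(c * s)) = -(y * s) := by
    simp only [smul_eq_mul]; field_simp; ring
  rw [harg, smul_eq_mul, smul_eq_mul, Real.exp_zero] at h
  linarith

lemma ENNReal.ofReal_inv_eq_lintegral_exp {D : ℝ} (hD : 0 < D) :
    ENNReal.ofReal D⁻¹ = ∫⁻ s in Ioi 0, ENNReal.ofReal (Real.exp (-(D * s))) := by
  have hint : IntegrableOn (fun s ↦ Real.exp (-(D * s))) (Ioi 0) := by
    simpa only [neg_mul] using exp_neg_integrableOn_Ioi 0 hD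
  have hval : ∫ s in Ioi 0, Real.exp (-(D * s)) = D⁻¹ := by
    have := integral_comp_mul_left_Ioi (fun x ↦ Real.exp (-x)) 0 hD
    rwa [mul_zero, integral_exp_neg_Ioi_zero, smul_eq_mul, mul_one] at this
  rw [← ofReal_integral_eq_lintegral_ofReal hint (ae_of_all _ fun _ ↦ Real.exp_nonneg _), hval]

lemma lintegral_ofReal_inv_eq_setLIntegral_lintegral_exp {Ω : Type*} [MeasurableSpace Ω]
    (μ : Measure Ω) [SFinite μ] {D : Ω → ℝ} (hD : Measurable D) (hpos : ∀ ω, 0 < D ω) :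
    ∫⁻ ω, ENNReal.ofReal (D ω)⁻¹ ∂μ
      = ∫⁻ s in Ioi 0, ∫⁻ ω, ENNReal.ofReal (Real.exp (-(D ω * s))) ∂μ := by
  simp_rw [ENNReal.ofReal_inv_eq_lintegral_exp (hpos _)]
  exact lintegral_lintegral_swap (by fun_prop)

lemma setLIntegral_exp_neg_mul_mul_pow_le {c : ℝ} (hc : 1 ≤ c) (k : ℕ) :
    ∫⁻ s in Ioi 0, ENNReal.ofReal (Real.exp (-(c * s)))
        * ENNReal.ofReal (1 - (1 - Real.exp (-(c * s))) / c) ^ k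
      ≤ ENNReal.ofReal (1 / (k + 1)) := by
  have hc0 : 0 < c := by linarith
  have hφ_nonneg : ∀ s, 0 ≤ 1 - (1 - Real.exp (-(c * s))) / c := fun s ↦ by
    rw [sub_nonneg, div_le_one hc0]
    linarith [Real.exp_nonneg (-(c * s))]
  have hderiv : ∀ s ∈ Ici (0:ℝ), HasDerivAt
      (fun s ↦ -((1 - (1 - Real.exp (-(c * s))) / c) ^ (k + 1) / (k + 1)))
      (Real.exp (-(c * s)) * (1 - (1 - Real.exp (-(c * s))) / c) ^ k) s := by
    intro s _
    have hlin : HasDerivAt (fun s ↦ -(c * s)) (-c) s := by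
      simpa using ((hasDerivAt_id' s).const_mul c).fun_neg
    have hφ := ((hlin.exp.const_sub 1).div_const c).const_sub 1
    exact ((hφ.pow (k + 1)).div_const ((k:ℝ) + 1)).neg.congr_deriv (by
      rw [Nat.add_sub_cancel]; push_cast; field_simp)
  have hlim : Tendsto (fun s ↦ -((1 - (1 - Real.exp (-(c * s))) / c) ^ (k + 1) / (k + 1)))
      atTop (𝓝 (-((1 - (1 - 0) / c) ^ (k + 1) / (k + 1)))) := by
    have : Tendsto (fun s ↦ Real.exp (-(c * s))) atTop (𝓝 0) :=
      Real.tendsto_exp_neg_atTop_nhds_zero.comp (tendsto_id.const_mul_atTop hc0)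
    exact ((((this.const_sub 1).div_const c).const_sub 1).pow (k + 1)).div_const _ |>.neg
  have hnonneg : ∀ s ∈ Ioi (0:ℝ),
      0 ≤ Real.exp (-(c * s)) * (1 - (1 - Real.exp (-(c * s))) / c) ^ k :=
    fun s _ ↦ mul_nonneg (Real.exp_nonneg _) (pow_nonneg (hφ_nonneg s) k)
  simp_rw [← ENNReal.ofReal_pow (hφ_nonneg _), ← ENNReal.ofReal_mul (Real.exp_nonneg _)]
  rw [← ofReal_integral_eq_lintegral_ofReal
      (integrableOn_Ioi_deriv_of_nonneg' hderiv hnonneg hlim)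
      ((ae_restrict_iff' measurableSet_Ioi).2 (ae_of_all _ hnonneg)),
    integral_Ioi_of_hasDerivAt_of_nonneg' hderiv hnonneg hlim]
  refine ENNReal.ofReal_le_ofReal ?_
  simp only [mul_zero, neg_zero, Real.exp_zero, sub_self, zero_div, sub_zero, one_pow]
  have : 0 ≤ (1 - 1 / c) ^ (k + 1) / (k + 1) := by
    have : 1 / c ≤ 1 := (div_le_one hc0).2 hc
    have : 0 ≤ 1 - 1 / c := by linarith
    positivity
  linarith

section Laplace

variable {Ω : Type*} [MeasurableSpace Ω] {μ : Measure Ω} [IsProbabilityMeasure μ]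

lemma lintegral_exp_neg_mul_le_of_one_le_integral {Y : Ω → ℝ} (hY : Measurable Y) {c : ℝ}
    (hc : 0 < c) (hY0 : ∀ ω, 0 ≤ Y ω) (hYc : ∀ ω, Y ω ≤ c) (hEY : 1 ≤ ∫ ω, Y ω ∂μ)
    {s : ℝ} (hs : 0 ≤ s) :
    ∫⁻ ω, ENNReal.ofReal (Real.exp (-(Y ω * s))) ∂μ
      ≤ ENNReal.ofReal (1 - (1 - Real.exp (-(c * s))) / c) := by
  have hβ0 : 0 ≤ 1 - Real.exp (-(c * s)) := by
    simpa using Real.exp_le_one_iff.2 (by nlinarith : -(c * s) ≤ 0)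
  have hβ1 : 1 - Real.exp (-(c * s)) ≤ 1 := by linarith [Real.exp_nonneg (-(c * s))]
  have hYint : Integrable Y μ :=
    Integrable.of_bound hY.aestronglyMeasurable c
      (ae_of_all _ fun ω ↦ by rw [Real.norm_eq_abs, abs_of_nonneg (hY0 ω)]; exact hYc ω)
  have hchord_int : Integrable (fun ω ↦ 1 - Y ω / c * (1 - Real.exp (-(c * s)))) μ :=
    (integrable_const 1).sub ((hYint.div_const c).mul_const _)
  have hchord_nonneg : ∀ ω, 0 ≤ 1 - Y ω / c * (1 - Real.exp (-(c * s))) := fun ω ↦ by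
    linarith [mul_le_one₀ ((div_le_one hc).2 (hYc ω)) hβ0 hβ1]
  calc ∫⁻ ω, ENNReal.ofReal (Real.exp (-(Y ω * s))) ∂μ
      ≤ ∫⁻ ω, ENNReal.ofReal (1 - Y ω / c * (1 - Real.exp (-(c * s)))) ∂μ :=
        lintegral_mono fun ω ↦
          ENNReal.ofReal_le_ofReal (Real.exp_neg_mul_le_chord hc (hY0 ω) (hYc ω))
    _ = ENNReal.ofReal (1 - (∫ ω, Y ω ∂μ) / c * (1 - Real.exp (-(c * s)))) := by
        rw [← ofReal_integral_eq_lintegral_ofReal hchord_int (ae_of_all _ hchord_nonneg),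
          integral_sub (integrable_const 1) ((hYint.div_const c).mul_const _),
          integral_mul_const, integral_div]
        simp
    _ ≤ ENNReal.ofReal (1 - (1 - Real.exp (-(c * s))) / c) := by
        refine ENNReal.ofReal_le_ofReal ?_
        have := mul_le_mul_of_nonneg_right ((div_le_div_iff_of_pos_right hc).2 hEY) hβ0
        rw [one_div_mul_eq_div] at this
        linarith

lemma lintegral_exp_neg_mul_const_add_sum_le {ι : Type*} {Y : ι → Ω → ℝ}
    (hY : ∀ i, Measurable (Y i)) (hindep : iIndepFun Y μ) {c A : ℝ} (hc : 0 < c) (hcA : c ≤ A)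
    (hY0 : ∀ i ω, 0 ≤ Y i ω) (hYc : ∀ i ω, Y i ω ≤ c) {T N : Finset ι} (hNT : N ⊆ T)
    (hmean : ∀ i ∈ N, 1 ≤ ∫ ω, Y i ω ∂μ) {s : ℝ} (hs : 0 ≤ s) :
    ∫⁻ ω, ENNReal.ofReal (Real.exp (-((A + ∑ i ∈ T, Y i ω) * s))) ∂μ
      ≤ ENNReal.ofReal (Real.exp (-(c * s)))
        * ENNReal.ofReal (1 - (1 - Real.exp (-(c * s))) / c) ^ N.card := by
  classical
  set F : ι → Ω → ℝ≥0∞ := fun i ω ↦ ENNReal.ofReal (Real.exp (-(Y i ω * s)))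
  have hFmeas : ∀ i, Measurable (F i) := fun i ↦ by fun_prop
  have hFindep : iIndepFun F μ :=
    hindep.comp (fun _ y ↦ ENNReal.ofReal (Real.exp (-(y * s)))) fun _ ↦ by fun_prop
  have hF_le_one : ∀ i, ∫⁻ ω, F i ω ∂μ ≤ 1 := fun i ↦
    calc ∫⁻ ω, F i ω ∂μ ≤ ∫⁻ _, 1 ∂μ := lintegral_mono fun ω ↦ ENNReal.ofReal_le_one.2
          (Real.exp_le_one_iff.2 (by nlinarith [hY0 i ω]))
      _ = 1 := by simp
  have hsplit : ∀ ω, ENNReal.ofReal (Real.exp (-((A + ∑ i ∈ T, Y i ω) * s)))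
      = ENNReal.ofReal (Real.exp (-(A * s))) * ∏ i ∈ T, F i ω := fun ω ↦ by
    rw [← ENNReal.ofReal_prod_of_nonneg fun i _ ↦ Real.exp_nonneg _,
      ← ENNReal.ofReal_mul (Real.exp_nonneg _), ← Real.exp_sum, ← Real.exp_add]
    congr 2
    rw [add_mul, Finset.sum_mul, neg_add, Finset.sum_neg_distrib]
  rw [lintegral_congr hsplit, lintegral_const_mul _ (by fun_prop),
    lintegral_prod_eq_prod_lintegral_of_indepFun T F hFindep hFmeas,
    ← Finset.prod_sdiff hNT]
  refine mul_le_mul' (ENNReal.ofReal_le_ofReal (Real.exp_le_exp.2 (by nlinarith))) ?_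
  calc (∏ i ∈ T \ N, ∫⁻ ω, F i ω ∂μ) * ∏ i ∈ N, ∫⁻ ω, F i ω ∂μ
      ≤ 1 * ENNReal.ofReal (1 - (1 - Real.exp (-(c * s))) / c) ^ N.card :=
        mul_le_mul' (Finset.prod_le_one' fun i _ ↦ hF_le_one i) (Finset.prod_le_pow_card _ _ _
          fun i hi ↦ lintegral_exp_neg_mul_le_of_one_le_integral (hY i) hc (hY0 i) (hYc i)
            (hmean i hi) hs)
    _ = _ := one_mul _

theorem integral_inv_const_add_sum_le {ι : Type*} {Y : ι → Ω → ℝ}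
    (hY : ∀ i, Measurable (Y i)) (hindep : iIndepFun Y μ) {c A : ℝ} (hc : 1 ≤ c) (hcA : c ≤ A)
    (hY0 : ∀ i ω, 0 ≤ Y i ω) (hYc : ∀ i ω, Y i ω ≤ c) {T N : Finset ι} (hNT : N ⊆ T)
    (hmean : ∀ i ∈ N, 1 ≤ ∫ ω, Y i ω ∂μ) :
    ∫ ω, (A + ∑ i ∈ T, Y i ω)⁻¹ ∂μ ≤ 1 / (N.card + 1) := by
  have hpos : ∀ ω, 0 < A + ∑ i ∈ T, Y i ω := fun ω ↦ by
    linarith [Finset.sum_nonneg fun i (_ : i ∈ T) ↦ hY0 i ω]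
  have hmeas : Measurable fun ω ↦ A + ∑ i ∈ T, Y i ω := by fun_prop
  rw [integral_eq_lintegral_of_nonneg_ae (ae_of_all _ fun ω ↦ (inv_pos.2 (hpos ω)).le)
    hmeas.inv.aestronglyMeasurable]
  refine ENNReal.toReal_le_of_le_ofReal (by positivity) ?_
  calc ∫⁻ ω, ENNReal.ofReal (A + ∑ i ∈ T, Y i ω)⁻¹ ∂μ
      = ∫⁻ s in Ioi 0, ∫⁻ ω, ENNReal.ofReal (Real.exp (-((A + ∑ i ∈ T, Y i ω) * s))) ∂μ :=
        lintegral_ofReal_inv_eq_setLIntegral_lintegral_exp μ hmeas hpos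
    _ ≤ ∫⁻ s in Ioi 0, ENNReal.ofReal (Real.exp (-(c * s)))
          * ENNReal.ofReal (1 - (1 - Real.exp (-(c * s))) / c) ^ N.card :=
        setLIntegral_mono' measurableSet_Ioi fun s hs ↦
          lintegral_exp_neg_mul_const_add_sum_le hY hindep (by linarith) hcA hY0 hYc hNT hmean
            (le_of_lt hs)
    _ ≤ ENNReal.ofReal (1 / (N.card + 1)) := setLIntegral_exp_neg_mul_mul_pow_le hc N.card

end Laplace

section SuperUniform

variable {Ω : Type*} [MeasurableSpace Ω] {μ : Measure Ω} [IsProbabilityMeasure μ] {X : Ω → ℝ}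

lemma volume_inter_Ioc_le_measure_preimage_of_isUpperSet (hX : Measurable X)
    (hsup : ∀ t ∈ Icc (0:ℝ) 1, μ {ω | X ω ≤ t} ≤ ENNReal.ofReal t) {S : Set ℝ}
    (hS : IsUpperSet S) :
    volume (S ∩ Ioc 0 1) ≤ μ (X ⁻¹' S) := by
  rcases (S ∩ Ioc 0 1).eq_empty_or_nonempty with hempty | hne
  · simp [hempty]
  have hbdd : BddBelow (S ∩ Ioc 0 1) := ⟨0, fun u hu ↦ hu.2.1.le⟩
  -- each `u ∈ S ∩ (0, 1]` gives `μ (X ⁻¹' S) ≥ μ {X ≥ u} ≥ 1 - u`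
  have hlow : ∀ u ∈ S ∩ Ioc 0 1, 1 - μ.real (X ⁻¹' S) ≤ u := by
    rintro u ⟨huS, hu0, hu1⟩
    have hlt : μ.real {ω | X ω < u} ≤ u :=
      (measureReal_mono fun ω (h : X ω < u) ↦ h.le).trans
        (ENNReal.toReal_le_of_le_ofReal hu0.le (hsup u ⟨hu0.le, hu1⟩))
    have hge : μ.real {ω | X ω < u}ᶜ ≤ μ.real (X ⁻¹' S) :=
      measureReal_mono fun ω hω ↦ hS (not_lt.1 hω) huS
    rw [probReal_compl_eq_one_sub (measurableSet_lt hX measurable_const)] at hge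
    linarith
  calc volume (S ∩ Ioc 0 1) ≤ volume (Icc (sInf (S ∩ Ioc 0 1)) 1) :=
        measure_mono fun u hu ↦ ⟨csInf_le hbdd hu, hu.2.2⟩
    _ = ENNReal.ofReal (1 - sInf (S ∩ Ioc 0 1)) := Real.volume_Icc
    _ ≤ ENNReal.ofReal (μ.real (X ⁻¹' S)) :=
        ENNReal.ofReal_le_ofReal (by linarith [le_csInf hne hlow])
    _ = μ (X ⁻¹' S) := ofReal_measureReal

lemma setLIntegral_Ioc_le_lintegral_comp_of_superUniform (hX : Measurable X)
    (hsup : ∀ t ∈ Icc (0:ℝ) 1, μ {ω | X ω ≤ t} ≤ ENNReal.ofReal t) {G : ℝ → ℝ}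
    (hG : Monotone G) (hG0 : ∀ u, 0 ≤ G u) :
    ∫⁻ u in Ioc 0 1, ENNReal.ofReal (G u) ≤ ∫⁻ ω, ENNReal.ofReal (G (X ω)) ∂μ := by
  rw [lintegral_eq_lintegral_meas_lt _ (ae_of_all _ hG0) hG.measurable.aemeasurable,
    lintegral_eq_lintegral_meas_lt _ (ae_of_all _ fun _ ↦ hG0 _)
      (hG.measurable.comp hX).aemeasurable]
  refine lintegral_mono fun t ↦ ?_
  rw [Measure.restrict_apply (measurableSet_lt measurable_const hG.measurable)]
  exact volume_inter_Ioc_le_measure_preimage_of_isUpperSet hX hsup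
    fun a b hab ha ↦ ha.trans_le (hG hab)

lemma setIntegral_Ioc_le_integral_comp_of_superUniform (hX : Measurable X)
    (hsup : ∀ t ∈ Icc (0:ℝ) 1, μ {ω | X ω ≤ t} ≤ ENNReal.ofReal t) {G : ℝ → ℝ}
    (hG : Monotone G) (hG0 : ∀ u, 0 ≤ G u) {C : ℝ} (hGC : ∀ u, G u ≤ C) :
    ∫ u in Ioc 0 1, G u ≤ ∫ ω, G (X ω) ∂μ := by
  have hnorm : ∀ u, ‖G u‖ ≤ C := fun u ↦ by
    rw [Real.norm_eq_abs, abs_of_nonneg (hG0 u)]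
    exact hGC u
  have hint : IntegrableOn G (Ioc 0 1) :=
    Integrable.of_bound hG.measurable.aestronglyMeasurable C (ae_of_all _ hnorm)
  have hintX : Integrable (fun ω ↦ G (X ω)) μ :=
    Integrable.of_bound (hG.measurable.comp hX).aestronglyMeasurable C
      (ae_of_all _ fun _ ↦ hnorm _)
  rw [← ENNReal.ofReal_le_ofReal_iff (integral_nonneg fun _ ↦ hG0 _),
    ofReal_integral_eq_lintegral_ofReal hint (ae_of_all _ hG0),
    ofReal_integral_eq_lintegral_ofReal hintX (ae_of_all _ fun _ ↦ hG0 _)]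
  exact setLIntegral_Ioc_le_lintegral_comp_of_superUniform hX hsup hG hG0

end SuperUniform

lemma MonotoneOn.exists_monotone_extension_Icc_zero_one {g : ℝ → ℝ}
    (hmono : MonotoneOn g (Icc 0 1)) (hg01 : ∀ u ∈ Icc (0:ℝ) 1, g u ∈ Icc (0:ℝ) 1) :
    ∃ G : ℝ → ℝ, Monotone G ∧ (∀ u, G u ∈ Icc (0:ℝ) 1) ∧ EqOn G g (Icc 0 1) :=
  ⟨fun u ↦ g (projIcc 0 1 zero_le_one u),
    fun _ _ hab ↦ hmono (projIcc 0 1 _ _).2 (projIcc 0 1 _ _).2 (monotone_projIcc _ hab),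
    fun _ ↦ hg01 _ (projIcc 0 1 _ _).2,
    fun _ hu ↦ by simp only [projIcc_of_mem _ hu]⟩

lemma MonotoneOn.intervalIntegral_le {g : ℝ → ℝ} {a b C : ℝ} (hab : a ≤ b)
    (hmono : MonotoneOn g (Icc a b)) (hC : ∀ u ∈ Icc a b, g u ≤ C) :
    ∫ u in a..b, g u ≤ C * (b - a) := by
  have hint : IntervalIntegrable g volume a b :=
    MonotoneOn.intervalIntegrable (by rwa [uIcc_of_le hab])
  calc ∫ u in a..b, g u ≤ ∫ _ in a..b, C :=
        intervalIntegral.integral_mono_on hab hint intervalIntegrable_const hC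
    _ = C * (b - a) := by rw [intervalIntegral.integral_const, smul_eq_mul, mul_comm]

theorem imc_for_heterogeneous_class_general
    {Ω : Type*} [MeasurableSpace Ω] (μ : Measure Ω) [IsProbabilityMeasure μ]
    (m : ℕ) (p : Fin m → Ω → ℝ) (hmeas : ∀ i, Measurable (p i))
    (hindep : iIndepFun p μ)
    (hrange : ∀ i, ∀ᵐ ω ∂μ, p i ω ∈ Set.Icc (0:ℝ) 1)
    (H₀ : Finset (Fin m)) (m₀ : ℕ) (hcard : H₀.card = m₀)
    (hsup : ∀ h ∈ H₀, ∀ t ∈ Set.Icc (0:ℝ) 1, μ {ω | p h ω ≤ t} ≤ ENNReal.ofReal t)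
    (g : Fin m → ℝ → ℝ) (hmono : ∀ i, MonotoneOn (g i) (Set.Icc 0 1))
    (hg01 : ∀ i, ∀ u ∈ Set.Icc (0:ℝ) 1, g i u ∈ Set.Icc (0:ℝ) 1)
    (ν : Fin m → ℝ) (hν : ∀ i, ν i = ∫ u in (0:ℝ)..1, g i u) (hνpos : ∀ i, 0 < ν i) :
    ∀ h ∈ H₀,
      ∫ ω, (1 / (⨅ i, ν i) + (g h 0 / ν h
          + ∑ i ∈ Finset.univ.erase h, g i (p i ω) / ν i))⁻¹ ∂μ ≤ 1 / (m₀ : ℝ) := by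
  intro h hh
  have : Nonempty (Fin m) := ⟨h⟩
  have hinf_le : ∀ i, ⨅ i, ν i ≤ ν i := ciInf_le (Finite.bddBelow_range ν)
  have hinf_pos : 0 < ⨅ i, ν i := by
    obtain ⟨i₀, hi₀⟩ := exists_eq_ciInf_of_finite (f := ν)
    exact hi₀ ▸ hνpos i₀
  have hνh_le_one : ν h ≤ 1 := by
    simpa [hν h] using (hmono h).intervalIntegral_le zero_le_one fun u hu ↦ (hg01 h u hu).2
  choose G hGmono hG01 hGeq using
    fun i ↦ MonotoneOn.exists_monotone_extension_Icc_zero_one (hmono i) (hg01 i)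
  have hνG : ∀ i, ν i = ∫ u in Ioc 0 1, G i u := fun i ↦ by
    rw [hν i, intervalIntegral.integral_of_le zero_le_one]
    exact setIntegral_congr_fun measurableSet_Ioc fun u hu ↦
      (hGeq i (Ioc_subset_Icc_self hu)).symm
  have hmean : ∀ i ∈ H₀.erase h, 1 ≤ ∫ ω, G i (p i ω) / ν i ∂μ := fun i hi ↦ by
    rw [integral_div, le_div_iff₀ (hνpos i), one_mul, hνG i]
    exact setIntegral_Ioc_le_integral_comp_of_superUniform (hmeas i)
      (hsup i (Finset.mem_of_mem_erase hi)) (hGmono i) (fun u ↦ (hG01 i u).1)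
      fun u ↦ (hG01 i u).2
  have hae : ∀ᵐ ω ∂μ,
      1 / (⨅ i, ν i) + (g h 0 / ν h + ∑ i ∈ Finset.univ.erase h, g i (p i ω) / ν i)
        = 1 / (⨅ i, ν i) + g h 0 / ν h + ∑ i ∈ Finset.univ.erase h, G i (p i ω) / ν i := by
    filter_upwards [ae_all_iff.2 hrange] with ω hω
    rw [add_assoc]
    simp only [hGeq _ (hω _)]
  have hm₀ : ((H₀.erase h).card : ℝ) + 1 = m₀ := by
    rw [← hcard, ← Finset.card_erase_add_one hh, Nat.cast_succ]
  rw [integral_congr_ae (hae.mono fun ω hω ↦ congrArg Inv.inv hω), ← hm₀]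
  exact integral_inv_const_add_sum_le (fun i ↦ ((hGmono i).measurable.comp (hmeas i)).div_const _)
    (hindep.comp (fun i x ↦ G i x / ν i) fun i ↦ (hGmono i).measurable.div_const _)
    (one_le_one_div hinf_pos ((hinf_le h).trans hνh_le_one))
    (le_add_of_nonneg_right (div_nonneg (hg01 h 0 ⟨le_rfl, zero_le_one⟩).1 (hνpos h).le))
    (fun i ω ↦ div_nonneg (hG01 i _).1 (hνpos i).le)
    (fun i ω ↦ (div_le_div_of_nonneg_right (hG01 i _).2 (hνpos i).le).trans
      (one_div_le_one_div_of_le hinf_pos (hinf_le i)))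
    (Finset.erase_subset_erase h (Finset.subset_univ H₀)) hmean

/-- Inverse moment criterion for the heterogeneous class `F`: with individual
transformations `gᵢ`, rescaling constants `νᵢ` and
`m̂₀(p) = 1/min(ν₁,…,νₘ) + Σᵢ gᵢ(pᵢ)/νᵢ`, one has `E[1/m̂₀(p_{0,h})] ≤ 1/m₀` for every
null index `h`. -/
theorem imc_for_heterogeneous_class
    {Ω : Type*} [MeasurableSpace Ω] (μ : Measure Ω) [IsProbabilityMeasure μ]
    (m : ℕ) (p : Fin m → Ω → ℝ) (hmeas : ∀ i, Measurable (p i))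
    (hindep : iIndepFun p μ)
    (hrange : ∀ i, ∀ᵐ ω ∂μ, p i ω ∈ Set.Icc (0:ℝ) 1)
    (H₀ : Finset (Fin m)) (m₀ : ℕ) (hcard : H₀.card = m₀) (hm₀ : 1 ≤ m₀)
    (hsup : ∀ h ∈ H₀, ∀ t ∈ Set.Icc (0:ℝ) 1, μ {ω | p h ω ≤ t} ≤ ENNReal.ofReal t)
    (g : Fin m → ℝ → ℝ) (hmono : ∀ i, MonotoneOn (g i) (Set.Icc 0 1))
    (hg01 : ∀ i, ∀ u ∈ Set.Icc (0:ℝ) 1, g i u ∈ Set.Icc (0:ℝ) 1)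
    (ν : Fin m → ℝ) (hν : ∀ i, ν i = ∫ u in (0:ℝ)..1, g i u) (hνpos : ∀ i, 0 < ν i) :
    ∀ h ∈ H₀,
      ∫ ω, (1 / (⨅ i, ν i) + (g h 0 / ν h
          + ∑ i ∈ Finset.univ.erase h, g i (p i ω) / ν i))⁻¹ ∂μ ≤ 1 / (m₀ : ℝ) :=
  imc_for_heterogeneous_class_general μ m p hmeas hindep hrange H₀ m₀ hcard hsup g hmono hg01 ν hν
    hνpos
end

section
/- Let m̂₁ = 1/ν + Σᵢ gᵢ(pᵢ)/νᵢ and m̂₂ = 1/μ + Σᵢ hᵢ(pᵢ)/μᵢ with gᵢ, hᵢ : [0,1] → [0,1] non-decreasing, νᵢ = ∫₀¹ gᵢ > 0, μᵢ = ∫₀¹ hᵢ > 0, ν = min νᵢ, μ = min μᵢ. For λ ∈ [0,1] let fᵢ = κᵢ gᵢ + (1-κᵢ) hᵢ with κᵢ = λμᵢ/(λμᵢ + (1-λ)νᵢ) and εᵢ = ∫₀¹ fᵢ. Then λ·m̂₁ + (1-λ)·m̂₂ ≥ 1/min(ε₁,…,εₘ) + Σᵢ fᵢ(pᵢ)/εᵢ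 pointwise on [0,1]^m. -/
open MeasureTheory Set

/-!
Mixing `gᵢ` and `hᵢ` with the weight `κᵢ` makes the normalisations combine harmonically:
`εᵢ = νᵢ μᵢ / (λ μᵢ + (1-λ) νᵢ)`, so that `fᵢ / εᵢ = λ gᵢ / νᵢ + (1-λ) hᵢ / μᵢ` exactly.
The sums therefore agree term by term, and only the constant terms differ:
for `i₀` minimising `ε`,
`1 / min εᵢ = 1 / εᵢ₀ = λ / νᵢ₀ + (1-λ) / μᵢ₀ ≤ λ / min νᵢ + (1-λ) / min μᵢ`.
-/

lemma mixed_div_mixed_eq {a b lam κ : ℝ} (ha : a ≠ 0) (hb : b ≠ 0)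
    (hD : lam * b + (1 - lam) * a ≠ 0) (hκ : κ = lam * b / (lam * b + (1 - lam) * a))
    (x y : ℝ) :
    (κ * x + (1 - κ) * y) / (κ * a + (1 - κ) * b) = lam * (x / a) + (1 - lam) * (y / b) := by
  subst hκ
  have hmix : lam * b / (lam * b + (1 - lam) * a) * a
      + (1 - lam * b / (lam * b + (1 - lam) * a)) * b = a * b / (lam * b + (1 - lam) * a) := by
    field_simp
    ring
  rw [hmix]
  field_simp
  ring

lemma one_div_iInf_le_of_one_div_eq {ι : Type*} [Finite ι] {ν μ ε : ι → ℝ}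
    (hν : ∀ i, 0 < ν i) (hμ : ∀ i, 0 < μ i) {lam : ℝ} (hlam : lam ∈ Icc (0 : ℝ) 1)
    (hε : ∀ i, 1 / ε i = lam * (1 / ν i) + (1 - lam) * (1 / μ i)) :
    1 / (⨅ i, ε i) ≤ lam * (1 / ⨅ i, ν i) + (1 - lam) * (1 / ⨅ i, μ i) := by
  cases isEmpty_or_nonempty ι
  · simp [Real.iInf_of_isEmpty]
  obtain ⟨i₀, hi₀⟩ := exists_eq_ciInf_of_finite (f := ε)
  obtain ⟨j, hj⟩ := exists_eq_ciInf_of_finite (f := ν)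
  obtain ⟨k, hk⟩ := exists_eq_ciInf_of_finite (f := μ)
  have hν_le : ⨅ i, ν i ≤ ν i₀ := ciInf_le (Finite.bddBelow_range ν) i₀
  have hμ_le : ⨅ i, μ i ≤ μ i₀ := ciInf_le (Finite.bddBelow_range μ) i₀
  have hν_pos : 0 < ⨅ i, ν i := hj ▸ hν j
  have hμ_pos : 0 < ⨅ i, μ i := hk ▸ hμ k
  have hlam₀ : 0 ≤ lam := hlam.1
  have hlam₁ : 0 ≤ 1 - lam := sub_nonneg.2 hlam.2
  rw [← hi₀, hε i₀]
  gcongr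

theorem convex_combination_dominates_class_F_estimator_general
    (m : ℕ) (g h : Fin m → ℝ → ℝ)
    (hg : ∀ i, MonotoneOn (g i) (Set.Icc 0 1)) (hh : ∀ i, MonotoneOn (h i) (Set.Icc 0 1))
    (ν μ : Fin m → ℝ)
    (hν : ∀ i, ν i = ∫ u in (0:ℝ)..1, g i u) (hνpos : ∀ i, 0 < ν i)
    (hμ : ∀ i, μ i = ∫ u in (0:ℝ)..1, h i u) (hμpos : ∀ i, 0 < μ i)
    (lam : ℝ) (hlam : lam ∈ Set.Icc (0:ℝ) 1)
    (κ : Fin m → ℝ) (hκ : ∀ i, κ i = lam * μ i / (lam * μ i + (1 - lam) * ν i))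
    (f : Fin m → ℝ → ℝ) (hf : ∀ i u, f i u = κ i * g i u + (1 - κ i) * h i u)
    (ε : Fin m → ℝ) (hε : ∀ i, ε i = ∫ u in (0:ℝ)..1, f i u) :
    ∀ p : Fin m → ℝ, (∀ i, p i ∈ Set.Icc (0:ℝ) 1) →
      1 / (⨅ i, ε i) + ∑ i, f i (p i) / ε i ≤
        lam * (1 / (⨅ i, ν i) + ∑ i, g i (p i) / ν i) +
          (1 - lam) * (1 / (⨅ i, μ i) + ∑ i, h i (p i) / μ i) := by
  intro p _
  have hD : ∀ i, lam * μ i + (1 - lam) * ν i ≠ 0 := fun i => by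
    have := mul_nonneg (sub_nonneg.2 hlam.2) (hνpos i).le
    rcases hlam.1.eq_or_lt with rfl | hlam_pos
    · simpa using (hνpos i).ne'
    · exact (add_pos_of_pos_of_nonneg (mul_pos hlam_pos (hμpos i)) this).ne'
  have hε_eq : ∀ i, ε i = κ i * ν i + (1 - κ i) * μ i := fun i => by
    have hgi := uIcc_of_le (zero_le_one' ℝ) ▸ hg i |>.intervalIntegrable (μ := volume)
    have hhi := uIcc_of_le (zero_le_one' ℝ) ▸ hh i |>.intervalIntegrable (μ := volume)
    rw [hε, hν, hμ]
    simp only [hf]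
    rw [intervalIntegral.integral_add (hgi.const_mul _) (hhi.const_mul _),
      intervalIntegral.integral_const_mul, intervalIntegral.integral_const_mul]
  have hdiv : ∀ i x y, (κ i * x + (1 - κ i) * y) / ε i = lam * (x / ν i) + (1 - lam) * (y / μ i) :=
    fun i => hε_eq i ▸ mixed_div_mixed_eq (hνpos i).ne' (hμpos i).ne' (hD i) (hκ i)
  have hconst : 1 / (⨅ i, ε i) ≤ lam * (1 / ⨅ i, ν i) + (1 - lam) * (1 / ⨅ i, μ i) :=
    one_div_iInf_le_of_one_div_eq hνpos hμpos hlam fun i => by simpa using hdiv i 1 1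
  have hsum : ∑ i, f i (p i) / ε i
      = lam * ∑ i, g i (p i) / ν i + (1 - lam) * ∑ i, h i (p i) / μ i := by
    simp only [Finset.mul_sum, ← Finset.sum_add_distrib, hf, hdiv]
  rw [hsum]
  linarith

/-- A convex combination of two heterogeneous estimators dominates, pointwise
on `[0,1]^m`, an estimator of the class `F` built from the mixed transformations
`fᵢ = κᵢ gᵢ + (1-κᵢ) hᵢ`. -/
theorem convex_combination_dominates_class_F_estimator
    (m : ℕ) (g h : Fin m → ℝ → ℝ)
    (hg : ∀ i, MonotoneOn (g i) (Set.Icc 0 1)) (hh : ∀ i, MonotoneOn (h i) (Set.Icc 0 1))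
    (hg01 : ∀ i, ∀ u ∈ Set.Icc (0:ℝ) 1, g i u ∈ Set.Icc (0:ℝ) 1)
    (hh01 : ∀ i, ∀ u ∈ Set.Icc (0:ℝ) 1, h i u ∈ Set.Icc (0:ℝ) 1)
    (ν μ : Fin m → ℝ)
    (hν : ∀ i, ν i = ∫ u in (0:ℝ)..1, g i u) (hνpos : ∀ i, 0 < ν i)
    (hμ : ∀ i, μ i = ∫ u in (0:ℝ)..1, h i u) (hμpos : ∀ i, 0 < μ i)
    (lam : ℝ) (hlam : lam ∈ Set.Icc (0:ℝ) 1)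
    (κ : Fin m → ℝ) (hκ : ∀ i, κ i = lam * μ i / (lam * μ i + (1 - lam) * ν i))
    (f : Fin m → ℝ → ℝ) (hf : ∀ i u, f i u = κ i * g i u + (1 - κ i) * h i u)
    (ε : Fin m → ℝ) (hε : ∀ i, ε i = ∫ u in (0:ℝ)..1, f i u) :
    ∀ p : Fin m → ℝ, (∀ i, p i ∈ Set.Icc (0:ℝ) 1) →
      1 / (⨅ i, ε i) + ∑ i, f i (p i) / ε i ≤
        lam * (1 / (⨅ i, ν i) + ∑ i, g i (p i) / ν i) +
          (1 - lam) * (1 / (⨅ i, μ i) + ∑ i, h i (p i) / μ i) :=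
  convex_combination_dominates_class_F_estimator_general m g h hg hh ν μ hν hνpos hμ hμpos lam hlam
    κ hκ f hf ε hε
end
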